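/- arXiv:2409.09171 — 5 statements merged into one kernel-verified Lean document; each statement's English description precedes it below -/
import Mathlib

section
/- If the language L(A) of a Büchi automaton A is nonempty, then A accepts some ultimately periodic word, i.e. some word of the form ρσ^ω with ρ, σ finite words and σ nonempty. -/
/-- A Büchi automaton over alphabet `A`: a finite state set (`Fin n`), a
transition relation, initial states and recurrence states. -/
structure Buchi (A : Type) where
  n : ℕ
  trans : Fin n → A → Fin n → Prop
  start : Set (Fin n)
  recur : Set (Fin n)

/-- Acceptance of an infinite word by a Büchi automaton: there is a run from
an initial state visiting recurrence states infinitely often. -/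
def Buchi.Accepts {A : Type} (B : Buchi A) (w : ℕ → A) : Prop :=
  ∃ ρ : ℕ → Fin B.n, ρ 0 ∈ B.start ∧ (∀ i, B.trans (ρ i) (w i) (ρ (i + 1))) ∧
    ∀ N, ∃ i, N ≤ i ∧ ρ i ∈ B.recur

/-- The language of a Büchi automaton. -/
def Buchi.lang {A : Type} (B : Buchi A) : Set (ℕ → A) := {w | B.Accepts w}

/-- The infinite word `ρ σ^ω` determined by a finite prefix `ρ` and a nonempty
finite period `σ`. -/
def extendPer {α : Type} (ρ σ : List α) (hσ : σ ≠ []) : ℕ → α := fun i =>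
  if h : i < ρ.length then ρ.get ⟨i, h⟩
  else σ.get ⟨(i - ρ.length) % σ.length, Nat.mod_lt _ (List.length_pos_iff.mpr hσ)⟩

/-- An infinite word is ultimately periodic if it equals `ρ σ^ω` for finite
words `ρ, σ` with `σ` nonempty. -/
def UltPeriodic {α : Type} (w : ℕ → α) : Prop :=
  ∃ (ρ σ : List α) (hσ : σ ≠ []), w = extendPer ρ σ hσ

/-!
An accepting run visits recurrence states infinitely often, so by pigeonhole it passes
through the same recurrence state `q` at two times `i < i + p`. Replaying the first `i`
letters and then the segment `[i, i + p)` of the word forever gives an ultimately periodic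
word, and the run replayed the same way is an accepting run on it that returns to `q` every
`p` steps.
-/

/-- The index read at time `n` when the prefix `[0, i)` is followed by the loop
`[i, i + p)` repeated forever. -/
def lassoIndex (i p n : ℕ) : ℕ :=
  if n < i then n else i + (n - i) % p

theorem Nat.add_one_mod_eq_ite {m p : ℕ} (hp : 0 < p) :
    (m + 1) % p = if m % p + 1 = p then 0 else m % p + 1 := by
  rw [← Nat.mod_add_mod]
  split_ifs with h
  · rw [h, Nat.mod_self]
  · exact Nat.mod_eq_of_lt (by have := Nat.mod_lt m hp; omega)

section lassoIndex

variable {i p : ℕ}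

@[simp]
theorem lassoIndex_zero : lassoIndex i p 0 = 0 := by
  unfold lassoIndex
  split_ifs with hi
  · rfl
  · simp [Nat.eq_zero_of_not_pos hi]

theorem lassoIndex_succ (hp : 0 < p) (n : ℕ) :
    lassoIndex i p (n + 1) =
      if lassoIndex i p n + 1 = i + p then i else lassoIndex i p n + 1 := by
  unfold lassoIndex
  rcases lt_or_ge n i with hn | hn
  · rw [if_pos hn, if_neg (show n + 1 ≠ i + p by omega)]
    split_ifs
    · rfl
    · simp [show n + 1 = i by omega]
  · rw [if_neg (show ¬n + 1 < i by omega), if_neg (show ¬n < i by omega),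
      show n + 1 - i = n - i + 1 by omega, Nat.add_one_mod_eq_ite hp]
    split_ifs <;> omega

theorem lassoIndex_add_mul (N : ℕ) : lassoIndex i p (i + N * p) = i := by
  simp [lassoIndex]

theorem ultPeriodic_comp_lassoIndex {α : Type} (w : ℕ → α) (hp : 0 < p) :
    UltPeriodic (w ∘ lassoIndex i p) := by
  have hloop : List.ofFn (fun t : Fin p => w (i + t)) ≠ [] := by
    simpa [List.ofFn_eq_nil_iff] using hp.ne'
  refine ⟨List.ofFn (fun t : Fin i => w t), _, hloop, funext fun n => ?_⟩
  by_cases hn : n < i <;> simp [lassoIndex, extendPer, hn]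

end lassoIndex

theorem exists_lt_map_eq_of_frequently_mem {β : Type*} [Finite β] {f : ℕ → β} {s : Set β}
    (h : ∀ N, ∃ n, N ≤ n ∧ f n ∈ s) : ∃ i j, i < j ∧ f i = f j ∧ f i ∈ s := by
  have hinf : {n | f n ∈ s}.Infinite :=
    Nat.frequently_atTop_iff_infinite.mp (Filter.frequently_atTop.mpr h)
  have := hinf.to_subtype
  obtain ⟨⟨a, ha⟩, ⟨b, hb⟩, hne, heq⟩ :=
    Finite.exists_ne_map_eq_of_infinite (fun n : {n | f n ∈ s} => f n)
  rcases Nat.lt_or_gt_of_ne fun hab => hne (Subtype.ext hab) with hab | hba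
  · exact ⟨a, b, hab, heq, ha⟩
  · exact ⟨b, a, hba, heq.symm, hb⟩

theorem Buchi.accepts_comp_lassoIndex {A : Type} (B : Buchi A) {w : ℕ → A} {ρ : ℕ → Fin B.n}
    (hstart : ρ 0 ∈ B.start) (htrans : ∀ n, B.trans (ρ n) (w n) (ρ (n + 1)))
    {i p : ℕ} (hp : 0 < p) (hloop : ρ (i + p) = ρ i) (hrecur : ρ i ∈ B.recur) :
    B.Accepts (w ∘ lassoIndex i p) := by
  refine ⟨ρ ∘ lassoIndex i p, by simpa using hstart, fun n => ?_, fun N => ?_⟩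
  · have hnext : ρ (lassoIndex i p (n + 1)) = ρ (lassoIndex i p n + 1) := by
      rw [lassoIndex_succ hp]
      split_ifs with h
      · rw [h, hloop]
      · rfl
    simpa only [Function.comp_apply, hnext] using htrans (lassoIndex i p n)
  · exact ⟨i + N * p, le_add_left (Nat.le_mul_of_pos_right N hp),
      by simpa [lassoIndex_add_mul] using hrecur⟩

theorem buchi_nonempty_accepts_ultimately_periodic_general (A : Type)
    (B : Buchi A) (h : B.lang.Nonempty) :
    ∃ w ∈ B.lang, UltPeriodic w := by
  obtain ⟨w, ρ, hstart, htrans, hrecur⟩ := h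
  obtain ⟨i, j, hij, hloop, hi⟩ := exists_lt_map_eq_of_frequently_mem hrecur
  have hp : 0 < j - i := Nat.sub_pos_of_lt hij
  refine ⟨w ∘ lassoIndex i (j - i), B.accepts_comp_lassoIndex hstart htrans hp ?_ hi,
    ultPeriodic_comp_lassoIndex w hp⟩
  rw [Nat.add_sub_cancel' hij.le, hloop]

/-- if the language of a Büchi automaton (over a finite nonempty
alphabet) is nonempty, it accepts an ultimately periodic word. -/
theorem buchi_nonempty_accepts_ultimately_periodic (A : Type) [Fintype A]
    [Nonempty A] (B : Buchi A) (h : B.lang.Nonempty) :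
    ∃ w ∈ B.lang, UltPeriodic w :=
  buchi_nonempty_accepts_ultimately_periodic_general A B h
end

section
/- LTL is compendious: its consequence operator Cn_LTL is Tarskian and Boolean, LTL is non-finitary (it has infinitely many pairwise non-equivalent formulae, e.g. p, Xp, X²p, …), and LTL satisfies Discerning (for all sets X, Y of complete consistent LTL theories, ⋂X = ⋂Y implies X = Y). -/
/-- LTL formulae over a set `AP` of atomic propositions:
`⊥ | p | ¬φ | φ∨φ | Xφ | φ U φ`. -/
inductive LTLFormula (AP : Type) : Type
  | bot : LTLFormula AP
  | atom : AP → LTLFormula AP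
  | neg : LTLFormula AP → LTLFormula AP
  | disj : LTLFormula AP → LTLFormula AP → LTLFormula AP
  | next : LTLFormula AP → LTLFormula AP
  | untl : LTLFormula AP → LTLFormula AP → LTLFormula AP

/-- A trace is an infinite sequence of sets of atomic propositions. -/
abbrev Trace (AP : Type) : Type := ℕ → Set AP

/-- The suffix `π^i` of a trace. -/
def Trace.suffix {AP : Type} (π : Trace AP) (i : ℕ) : Trace AP := fun j => π (i + j)

/-- Satisfaction of an LTL formula by a trace. -/
def LTLFormula.sat {AP : Type} : LTLFormula AP → Trace AP → Prop
  | .bot, _ => False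
  | .atom p, π => p ∈ π 0
  | .neg φ, π => ¬ LTLFormula.sat φ π
  | .disj φ ψ, π => LTLFormula.sat φ π ∨ LTLFormula.sat ψ π
  | .next φ, π => LTLFormula.sat φ (π.suffix 1)
  | .untl φ ψ, π => ∃ i, LTLFormula.sat ψ (π.suffix i) ∧ ∀ j < i, LTLFormula.sat φ (π.suffix j)

/-- A Kripke structure: a finite state set (`Fin n`), a nonempty set of initial
states, a left-total transition relation, and a labeling function. -/
structure Kripke (AP : Type) where
  n : ℕ
  init : Set (Fin n)
  init_nonempty : init.Nonempty
  trans : Fin n → Fin n → Prop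
  trans_total : ∀ s, ∃ s', trans s s'
  label : Fin n → Set AP

/-- The traces of a Kripke structure. -/
def Kripke.traces {AP : Type} (M : Kripke AP) : Set (Trace AP) :=
  {π | ∃ ρ : ℕ → Fin M.n, ρ 0 ∈ M.init ∧ (∀ i, M.trans (ρ i) (ρ (i + 1))) ∧
        ∀ i, π i = M.label (ρ i)}

/-- `M ⊨ φ` : every trace of `M` satisfies `φ`. -/
def Kripke.sat {AP : Type} (M : Kripke AP) (φ : LTLFormula AP) : Prop :=
  ∀ π ∈ M.traces, φ.sat π

/-- `M ⊨ X` : `M` satisfies every formula in `X`. -/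
def Kripke.satSet {AP : Type} (M : Kripke AP) (X : Set (LTLFormula AP)) : Prop :=
  ∀ φ ∈ X, M.sat φ

/-- The consequence operator of LTL: `ψ ∈ CnLTL AP X` iff every Kripke
structure satisfying all of `X` satisfies `ψ`. -/
def CnLTL (AP : Type) (X : Set (LTLFormula AP)) : Set (LTLFormula AP) :=
  {ψ | ∀ M : Kripke AP, M.satSet X → M.sat ψ}

/-- A consequence operator is Tarskian if it is monotone, extensive and
idempotent. -/
def Tarskian {Fm : Type} (Cn : Set Fm → Set Fm) : Prop :=
  (∀ X Y : Set Fm, X ⊆ Y → Cn X ⊆ Cn Y) ∧ (∀ X : Set Fm, X ⊆ Cn X) ∧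
    (∀ X : Set Fm, Cn (Cn X) = Cn X)

/-- A logic is Boolean if negation and disjunction satisfy
`(¬T)`, `(¬I)`, `(∨I)` and `(∨E)`.  (The set of all formulae is `Set.univ`.) -/
def BooleanLogic {Fm : Type} (Cn : Set Fm → Set Fm) (neg : Fm → Fm)
    (disj : Fm → Fm → Fm) : Prop :=
  (∀ φ, Cn {φ} ∩ Cn {neg φ} = Cn ∅) ∧
  (∀ φ, Cn {φ, neg φ} = Set.univ) ∧
  (∀ (X : Set Fm) (φ ψ : Fm), φ ∈ Cn X → disj φ ψ ∈ Cn X) ∧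
  (∀ (X : Set Fm) (α φ ψ : Fm),
      α ∈ Cn (X ∪ {φ}) → α ∈ Cn (X ∪ {ψ}) → α ∈ Cn (X ∪ {disj φ ψ}))

/-- The complete consistent theories: theories distinct from the set of all
formulae that contain `φ` or `¬φ` for every formula `φ`. -/
def CCT {Fm : Type} (Cn : Set Fm → Set Fm) (neg : Fm → Fm) : Set (Set Fm) :=
  {K | Cn K = K ∧ K ≠ Set.univ ∧ ∀ φ, φ ∈ K ∨ neg φ ∈ K}

/-- Discerning: different sets of complete consistent theories have different
intersections. -/
def Discerning {Fm : Type} (Cn : Set Fm → Set Fm) (neg : Fm → Fm) : Prop :=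
  ∀ X Y : Set (Set Fm), X ⊆ CCT Cn neg → Y ⊆ CCT Cn neg → ⋂₀ X = ⋂₀ Y → X = Y

/-- A logic is compendious if it is Tarskian, Boolean, non-finitary
(infinitely many theories) and Discerning. -/
def Compendious {Fm : Type} (Cn : Set Fm → Set Fm) (neg : Fm → Fm)
    (disj : Fm → Fm → Fm) : Prop :=
  Tarskian Cn ∧ BooleanLogic Cn neg disj ∧
    {K : Set Fm | Cn K = K}.Infinite ∧ Discerning Cn neg

/-- Iterated next operator `X^k φ`. -/
def LTLFormula.iterNext {AP : Type} : ℕ → LTLFormula AP → LTLFormula AP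
  | 0, φ => φ
  | k + 1, φ => LTLFormula.next (LTLFormula.iterNext k φ)


section Part1
open LTLFormula

variable {AP : Type}

lemma Trace.suffix_suffix (π : Trace AP) (i j : ℕ) :
    (π.suffix i).suffix j = π.suffix (i + j) := by
  funext t; simp [Trace.suffix, Nat.add_assoc]

lemma Trace.suffix_zero (π : Trace AP) : π.suffix 0 = π := by
  funext t; simp [Trace.suffix]

/-- subformulas -/
def subf : LTLFormula AP → List (LTLFormula AP)
  | .bot => [.bot]
  | .atom p => [.atom p]
  | .neg φ => .neg φ :: subf φ
  | .disj φ ψ => .disj φ ψ :: (subf φ ++ subf ψ)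
  | .next φ => .next φ :: subf φ
  | .untl φ ψ => .untl φ ψ :: (subf φ ++ subf ψ)

lemma mem_subf_self (φ : LTLFormula AP) : φ ∈ subf φ := by
  cases φ <;> simp [subf]

lemma subf_subset {χ σ : LTLFormula AP} (h : σ ∈ subf χ) : subf σ ⊆ subf χ := by
  induction χ with
  | bot => simp [subf] at h; subst h; exact fun _ h => h
  | atom p => simp [subf] at h; subst h; exact fun _ h => h
  | neg φ ih =>
      rcases (by simpa [subf] using h : σ = LTLFormula.neg φ ∨ σ ∈ subf φ) with h | h
      · subst h; exact fun _ h => h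
      · exact fun τ hτ => List.mem_cons_of_mem _ (ih h hτ)
  | disj φ ψ ih1 ih2 =>
      rcases (by simpa [subf] using h : σ = LTLFormula.disj φ ψ ∨ σ ∈ subf φ ∨ σ ∈ subf ψ) with h | h | h
      · subst h; exact fun _ h => h
      · exact fun τ hτ => List.mem_cons_of_mem _ (List.mem_append.mpr (Or.inl (ih1 h hτ)))
      · exact fun τ hτ => List.mem_cons_of_mem _ (List.mem_append.mpr (Or.inr (ih2 h hτ)))
  | next φ ih =>
      rcases (by simpa [subf] using h : σ = LTLFormula.next φ ∨ σ ∈ subf φ) with h | h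
      · subst h; exact fun _ h => h
      · exact fun τ hτ => List.mem_cons_of_mem _ (ih h hτ)
  | untl φ ψ ih1 ih2 =>
      rcases (by simpa [subf] using h : σ = LTLFormula.untl φ ψ ∨ σ ∈ subf φ ∨ σ ∈ subf ψ) with h | h | h
      · subst h; exact fun _ h => h
      · exact fun τ hτ => List.mem_cons_of_mem _ (List.mem_append.mpr (Or.inl (ih1 h hτ)))
      · exact fun τ hτ => List.mem_cons_of_mem _ (List.mem_append.mpr (Or.inr (ih2 h hτ)))

lemma mem_subf_neg {χ φ : LTLFormula AP} (h : LTLFormula.neg φ ∈ subf χ) : φ ∈ subf χ :=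
  subf_subset h (by simp [subf, mem_subf_self])
lemma mem_subf_next {χ φ : LTLFormula AP} (h : LTLFormula.next φ ∈ subf χ) : φ ∈ subf χ :=
  subf_subset h (by simp [subf, mem_subf_self])
lemma mem_subf_disj₁ {χ φ ψ : LTLFormula AP} (h : LTLFormula.disj φ ψ ∈ subf χ) : φ ∈ subf χ :=
  subf_subset h (by simp [subf, mem_subf_self])
lemma mem_subf_disj₂ {χ φ ψ : LTLFormula AP} (h : LTLFormula.disj φ ψ ∈ subf χ) : ψ ∈ subf χ :=
  subf_subset h (by simp [subf, mem_subf_self])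
lemma mem_subf_untl₁ {χ φ ψ : LTLFormula AP} (h : LTLFormula.untl φ ψ ∈ subf χ) : φ ∈ subf χ :=
  subf_subset h (by simp [subf, mem_subf_self])
lemma mem_subf_untl₂ {χ φ ψ : LTLFormula AP} (h : LTLFormula.untl φ ψ ∈ subf χ) : ψ ∈ subf χ :=
  subf_subset h (by simp [subf, mem_subf_self])

/-- absolute-position characterization of until on suffixes -/
lemma untl_sat_abs (φ ψ : LTLFormula AP) (τ : Trace AP) (p : ℕ) :
    (LTLFormula.untl φ ψ).sat (τ.suffix p) ↔
      ∃ k, p ≤ k ∧ ψ.sat (τ.suffix k) ∧ ∀ q, p ≤ q → q < k → φ.sat (τ.suffix q) := by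
  constructor
  · rintro ⟨i, hψ, hφ⟩
    refine ⟨p + i, Nat.le_add_right _ _, by rwa [Trace.suffix_suffix] at hψ, ?_⟩
    intro q hq1 hq2
    have := hφ (q - p) (by omega)
    rwa [Trace.suffix_suffix, Nat.add_sub_cancel' hq1] at this
  · rintro ⟨k, hk, hψ, hφ⟩
    refine ⟨k - p, ?_, ?_⟩
    · rwa [Trace.suffix_suffix, Nat.add_sub_cancel' hk]
    · intro j hj
      rw [Trace.suffix_suffix]
      exact hφ (p + j) (Nat.le_add_right _ _) (by omega)
end Part1
section Part2
variable {AP : Type}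

/-- the canonical lasso position map -/
def stv (c d : ℕ) (i : ℕ) : ℕ := if i < c + d then i else c + (i - c) % d

lemma stv_lt (c d : ℕ) (hd : 0 < d) (i : ℕ) : stv c d i < c + d := by
  unfold stv; split
  · assumption
  · have := Nat.mod_lt (i - c) hd; omega

lemma stv_small (c d i : ℕ) (h : i < c + d) : stv c d i = i := if_pos h

lemma stv_shift (c d : ℕ) (hd : 0 < d) (i : ℕ) (h : c + d ≤ i) :
    stv c d i = stv c d (i - d) := by
  unfold stv
  have h1 : ¬ i < c + d := by omega
  rw [if_neg h1]
  have h2 : i - c = (i - d - c) + d := by omega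
  rw [h2, Nat.add_mod_right]
  split
  · have : (i - d - c) % d = i - d - c := Nat.mod_eq_of_lt (by omega)
    omega
  · rfl

lemma stv_step (c d : ℕ) (hd : 0 < d) (i : ℕ) :
    stv c d (i + 1) = if stv c d i + 1 < c + d then stv c d i + 1 else c := by
  induction i using Nat.strong_induction_on with
  | _ i ih =>
    rcases lt_trichotomy (i + 1) (c + d) with h | h | h
    · rw [stv_small c d _ h, stv_small c d _ (by omega), if_pos (by omega)]
    · rw [stv_shift c d hd (i+1) (by omega), stv_small c d _ (by omega)]
      have : i + 1 - d = c := by omega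
      rw [this, stv_small c d i (by omega), if_neg (by omega)]
    · have hi : c + d ≤ i := by omega
      rw [stv_shift c d hd (i+1) (by omega), stv_shift c d hd i hi]
      have : i + 1 - d = (i - d) + 1 := by omega
      rw [this]
      exact ih (i - d) (by omega)

lemma stv_label (c d : ℕ) (hd : 0 < d) (π : Trace AP)
    (hper : ∀ i, c ≤ i → π (i + d) = π i) (i : ℕ) : π (stv c d i) = π i := by
  induction i using Nat.strong_induction_on with
  | _ i ih =>
    by_cases h : i < c + d
    · rw [stv_small c d i h]
    · rw [stv_shift c d hd i (by omega)]
      have h1 : π (stv c d (i - d)) = π (i - d) := ih (i - d) (by omega)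
      have h2 : π ((i - d) + d) = π (i - d) := hper (i - d) (by omega)
      have h3 : i - d + d = i := by omega
      rw [h1, ← h2, h3]

/-- Kripke structure with a single lasso trace -/
def lassoK (π : Trace AP) (c d : ℕ) (hd : 0 < d) : Kripke AP where
  n := c + d
  init := {⟨0, by omega⟩}
  init_nonempty := ⟨⟨0, by omega⟩, rfl⟩
  trans := fun s s' => (s' : ℕ) = if (s : ℕ) + 1 < c + d then (s : ℕ) + 1 else c
  trans_total := fun s => ⟨⟨if (s:ℕ)+1 < c+d then (s:ℕ)+1 else c, by split <;> omega⟩, rfl⟩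
  label := fun s => π (s : ℕ)

lemma lassoK_mem (π : Trace AP) (c d : ℕ) (hd : 0 < d)
    (hper : ∀ i, c ≤ i → π (i + d) = π i) :
    π ∈ (lassoK π c d hd).traces := by
  refine ⟨fun i => ⟨stv c d i, stv_lt c d hd i⟩, ?_, ?_, ?_⟩
  · show (⟨stv c d 0, _⟩ : Fin (c+d)) ∈ ({⟨0, _⟩} : Set (Fin (c+d)))
    have : stv c d 0 = 0 := stv_small c d 0 (by omega)
    simp only [Set.mem_singleton_iff, Fin.mk.injEq]; exact this
  · intro i
    show (stv c d (i+1) : ℕ) = if stv c d i + 1 < c + d then stv c d i + 1 else c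
    exact stv_step c d hd i
  · intro i
    show π i = π (stv c d i)
    rw [stv_label c d hd π hper i]

lemma lassoK_traces (π : Trace AP) (c d : ℕ) (hd : 0 < d)
    (hper : ∀ i, c ≤ i → π (i + d) = π i) :
    (lassoK π c d hd).traces = {π} := by
  ext σ
  simp only [Set.mem_singleton_iff]
  constructor
  · rintro ⟨ρ, h0, htr, hlab⟩
    have hval : ∀ i, (ρ i : ℕ) = stv c d i := by
      intro i
      induction i with
      | zero =>
        have : ρ 0 = ⟨0, Nat.add_pos_right c hd⟩ := h0
        rw [this, stv_small c d 0 (by omega)]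
      | succ i ih =>
        have := htr i
        simp only [lassoK] at this
        rw [this, ih, stv_step c d hd i]
    funext i
    rw [hlab i]
    show π ((ρ i : ℕ)) = π i
    rw [hval i, stv_label c d hd π hper i]
  · intro h
    rw [h]
    exact lassoK_mem π c d hd hper
end Part2
section Part3
open LTLFormula
variable {AP : Type}

theorem small_model (M : Kripke AP) (π : Trace AP) (hπ : π ∈ M.traces)
    (χ : LTLFormula AP) (hχ : χ.sat π) :
    ∃ π' ∈ M.traces, (∃ c d : ℕ, 0 < d ∧ ∀ i, c ≤ i → π' (i + d) = π' i) ∧ χ.sat π' := by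
  classical
  obtain ⟨ρ, h0, htr, hlab⟩ := hπ
  set L : List (LTLFormula AP) := subf χ with hL
  set t : ℕ → Fin M.n × (Fin L.length → Bool) :=
    fun i => (ρ i, fun k => decide ((L.get k).sat (π.suffix i))) with ht
  obtain ⟨v, hv⟩ := Finite.exists_infinite_fiber t
  have hS : (t ⁻¹' {v}).Infinite := Set.infinite_coe_iff.mp hv
  obtain ⟨i₀, hi₀⟩ := hS.nonempty
  have hAll : ∀ k : Fin L.length, ∃ m, ∀ φ ψ, L.get k = LTLFormula.untl φ ψ →
      (L.get k).sat (π.suffix i₀) →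
      i₀ ≤ m ∧ ψ.sat (π.suffix m) ∧ ∀ q, i₀ ≤ q → q < m → φ.sat (π.suffix q) := by
    intro k
    by_cases hu : ∃ φ ψ, L.get k = LTLFormula.untl φ ψ ∧ (L.get k).sat (π.suffix i₀)
    · obtain ⟨φ, ψ, hk, hsat⟩ := hu
      rw [hk] at hsat
      rw [untl_sat_abs] at hsat
      obtain ⟨m, hm1, hm2, hm3⟩ := hsat
      refine ⟨m, fun φ' ψ' hk' hs' => ?_⟩
      rw [hk] at hk'
      cases hk'
      exact ⟨hm1, hm2, hm3⟩
    · push_neg at hu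
      exact ⟨0, fun φ ψ hk hs => absurd hs (hu φ ψ hk)⟩
  choose W hW using hAll
  set B : ℕ := Finset.univ.sup W with hB
  obtain ⟨j, hjS, hjgt⟩ := hS.exists_gt (max i₀ B)
  have hij : i₀ < j := lt_of_le_of_lt (le_max_left _ _) hjgt
  have hBj : B < j := lt_of_le_of_lt (le_max_right _ _) hjgt
  obtain ⟨d, hdpos, hjd⟩ : ∃ d, 0 < d ∧ j = i₀ + d := ⟨j - i₀, by omega, by omega⟩
  subst hjd
  have htv : t i₀ = t (i₀ + d) := by
    have h1 : t i₀ = v := hi₀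
    have h2 : t (i₀ + d) = v := hjS
    rw [h1, h2]
  have hρj : ρ (i₀ + d) = ρ i₀ := by
    have := congrArg Prod.fst htv
    simpa [ht] using this.symm
  have hiff : ∀ σ ∈ L, (σ.sat (π.suffix i₀) ↔ σ.sat (π.suffix (i₀ + d))) := by
    intro σ hσ
    obtain ⟨k, hk⟩ := List.mem_iff_get.mp hσ
    have h2 := congrFun (congrArg Prod.snd htv) k
    simp only [ht] at h2
    rw [hk] at h2
    exact decide_eq_decide.mp h2
  -- the ultimately periodic trace, with position map `stv i₀ d`
  set π' : Trace AP := fun x => π (stv i₀ d x) with hπ'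
  have hrshift : ∀ x, i₀ ≤ x → stv i₀ d (x + d) = stv i₀ d x := by
    intro x hx
    have := stv_shift i₀ d hdpos (x + d) (by omega)
    simpa using this
  have hper : ∀ x, i₀ ≤ x → π' (x + d) = π' x := by
    intro x hx; simp only [hπ']; rw [hrshift x hx]
  have hsufper : ∀ x, i₀ ≤ x → π'.suffix (x + d) = π'.suffix x := by
    intro x hx; funext u
    show π' (x + d + u) = π' (x + u)
    have h1 : x + d + u = (x + u) + d := by omega
    rw [h1, hper (x + u) (by omega)]
  have hsufper' : ∀ (q : ℕ) (x : ℕ), i₀ ≤ x → π'.suffix (x + q * d) = π'.suffix x := by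
    intro q
    induction q with
    | zero => intro x _; simp
    | succ q ih =>
      intro x hx
      have h1 : x + (q + 1) * d = (x + q * d) + d := by ring
      rw [h1, hsufper (x + q * d) (by omega), ih x hx]
  have hsufr : ∀ x, π'.suffix x = π'.suffix (stv i₀ d x) := by
    intro x
    by_cases h : x < i₀ + d
    · rw [stv_small i₀ d x h]
    · have hst : stv i₀ d x = i₀ + (x - i₀) % d := by
        unfold stv; rw [if_neg h]
      have h' := Nat.div_add_mod (x - i₀) d
      rw [Nat.mul_comm] at h'
      have hdec : x = stv i₀ d x + ((x - i₀) / d) * d := by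
        rw [hst]; omega
      conv_lhs => rw [hdec]
      exact hsufper' _ _ (by rw [hst]; omega)
  have hagree : ∀ x, x < i₀ + d → π' x = π x := by
    intro x hx; simp only [hπ']; rw [stv_small i₀ d x hx]
  -- the truth lemma
  have key : ∀ σ : LTLFormula AP, σ ∈ L → ∀ p, p < i₀ + d →
      (σ.sat (π'.suffix p) ↔ σ.sat (π.suffix p)) := by
    intro σ
    induction σ with
    | bot => intro _ p _; simp [LTLFormula.sat]
    | atom q =>
      intro _ p hp
      show q ∈ (π'.suffix p) 0 ↔ q ∈ (π.suffix p) 0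
      show q ∈ π' (p + 0) ↔ q ∈ π (p + 0)
      rw [hagree (p + 0) (by omega)]
    | neg φ ih =>
      intro hm p hp
      have h1 := ih (mem_subf_neg hm) p hp
      show ¬ φ.sat (π'.suffix p) ↔ ¬ φ.sat (π.suffix p)
      rw [h1]
    | disj φ ψ ih1 ih2 =>
      intro hm p hp
      have h1 := ih1 (mem_subf_disj₁ hm) p hp
      have h2 := ih2 (mem_subf_disj₂ hm) p hp
      show φ.sat (π'.suffix p) ∨ ψ.sat (π'.suffix p) ↔ _
      rw [h1, h2]
      rfl
    | next φ ih =>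
      intro hm p hp
      have hφ := mem_subf_next hm
      show φ.sat ((π'.suffix p).suffix 1) ↔ φ.sat ((π.suffix p).suffix 1)
      rw [Trace.suffix_suffix, Trace.suffix_suffix]
      by_cases h : p + 1 < i₀ + d
      · exact ih hφ (p + 1) h
      · have hpj : p + 1 = i₀ + d := by omega
        rw [hpj]
        rw [hsufper i₀ (le_refl _), ih hφ i₀ (by omega)]
        exact hiff φ hφ
    | untl φ ψ ih1 ih2 =>
      intro hm p hp
      have hφ := mem_subf_untl₁ hm
      have hψ := mem_subf_untl₂ hm
      rw [untl_sat_abs, untl_sat_abs]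
      constructor
      · -- π' → π
        rintro ⟨k', hk'1, hk'2, hk'3⟩
        by_cases hcase : k' < i₀ + d
        · exact ⟨k', hk'1, (ih2 hψ k' hcase).mp hk'2, fun q hq1 hq2 =>
            (ih1 hφ q (by omega)).mp (hk'3 q hq1 hq2)⟩
        · have hy' : stv i₀ d k' = i₀ + (k' - i₀) % d := by
            unfold stv; rw [if_neg hcase]
          have hylt : stv i₀ d k' < i₀ + d := stv_lt i₀ d hdpos k'
          have hyi₀ : i₀ ≤ stv i₀ d k' := by rw [hy']; omega
          have hψy : ψ.sat (π.suffix (stv i₀ d k')) := by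
            have h2 := hk'2
            rw [hsufr k'] at h2
            exact (ih2 hψ _ hylt).mp h2
          have hA : ∀ q, p ≤ q → q < i₀ + d → φ.sat (π.suffix q) := by
            intro q hq1 hq2
            exact (ih1 hφ q hq2).mp (hk'3 q hq1 (by omega))
          have hBclaim : ∀ e, i₀ ≤ e → e < stv i₀ d k' → φ.sat (π.suffix e) := by
            intro e he1 he2
            have h' := Nat.div_add_mod (k' - i₀) d
            rw [Nat.mul_comm] at h'
            have helt := Nat.mod_lt (k' - i₀) hdpos
            have hq1m : 1 ≤ (k' - i₀) / d :=
              (Nat.one_le_div_iff hdpos).mpr (by omega)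
            have hdle : d ≤ ((k' - i₀) / d) * d := Nat.le_mul_of_pos_left d hq1m
            have hdeck : stv i₀ d k' + ((k' - i₀) / d) * d = k' := by
              rw [hy']; omega
            have hx1 : e + ((k' - i₀) / d) * d < k' := by omega
            have hx2 : p ≤ e + ((k' - i₀) / d) * d := by omega
            have h3 := hk'3 (e + ((k' - i₀) / d) * d) hx2 hx1
            rw [hsufper' ((k' - i₀) / d) e he1] at h3
            exact (ih1 hφ e (by omega)).mp h3
          by_cases hpy : p ≤ stv i₀ d k'
          · exact ⟨stv i₀ d k', hpy, hψy, fun q hq1 hq2 => hA q hq1 (by omega)⟩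
          · have hσi₀ : (LTLFormula.untl φ ψ).sat (π.suffix i₀) := by
              rw [untl_sat_abs]
              exact ⟨stv i₀ d k', hyi₀, hψy, fun q hq1 hq2 => hBclaim q hq1 hq2⟩
            have hσj := (hiff _ hm).mp hσi₀
            rw [untl_sat_abs] at hσj
            obtain ⟨k'', hk''1, hk''2, hk''3⟩ := hσj
            refine ⟨k'', by omega, hk''2, ?_⟩
            intro q hq1 hq2
            by_cases hqj : q < i₀ + d
            · exact hA q hq1 hqj
            · exact hk''3 q (by omega) hq2
      · -- π → π'
        rintro ⟨k, hk1, hk2, hk3⟩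
        by_cases hcase : k < i₀ + d
        · exact ⟨k, hk1, (ih2 hψ k hcase).mpr hk2, fun q hq1 hq2 =>
            (ih1 hφ q (by omega)).mpr (hk3 q hq1 hq2)⟩
        · have hσj : (LTLFormula.untl φ ψ).sat (π.suffix (i₀ + d)) := by
            rw [untl_sat_abs]
            exact ⟨k, by omega, hk2, fun q hq1 hq2 => hk3 q (by omega) hq2⟩
          have hσi₀ := (hiff _ hm).mpr hσj
          obtain ⟨kidx, hkidx⟩ := List.mem_iff_get.mp hm
          obtain ⟨hm1, hm2, hm3⟩ := hW kidx φ ψ hkidx (by rw [hkidx]; exact hσi₀)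
          have hmB : W kidx ≤ B := Finset.le_sup (Finset.mem_univ kidx)
          have hmj : W kidx < i₀ + d := by omega
          refine ⟨W kidx + d, by omega, ?_, ?_⟩
          · rw [hsufper (W kidx) hm1]
            exact (ih2 hψ _ hmj).mpr hm2
          · intro q hq1 hq2
            by_cases hqj : q < i₀ + d
            · exact (ih1 hφ q hqj).mpr (hk3 q hq1 (by omega))
            · have hqe : i₀ ≤ q - d := by omega
              have hqlt : q - d < W kidx := by omega
              have hq : π'.suffix q = π'.suffix (q - d) := by
                conv_lhs => rw [show q = (q - d) + d from by omega]
                exact hsufper (q - d) hqe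
              rw [hq]
              exact (ih1 hφ (q - d) (by omega)).mpr (hm3 (q - d) hqe hqlt)
  -- conclude
  refine ⟨π', ?_, ⟨i₀, d, hdpos, hper⟩, ?_⟩
  · refine ⟨fun x => ρ (stv i₀ d x), ?_, ?_, ?_⟩
    · show ρ (stv i₀ d 0) ∈ M.init
      rw [stv_small i₀ d 0 (by omega)]; exact h0
    · intro i
      show M.trans (ρ (stv i₀ d i)) (ρ (stv i₀ d (i + 1)))
      rw [stv_step i₀ d hdpos i]
      by_cases hlt : stv i₀ d i + 1 < i₀ + d
      · rw [if_pos hlt]; exact htr (stv i₀ d i)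
      · rw [if_neg hlt]
        have hstep : stv i₀ d i + 1 = i₀ + d := by
          have := stv_lt i₀ d hdpos i; omega
        rw [← hρj, ← hstep]
        exact htr (stv i₀ d i)
    · intro i
      show π' i = M.label (ρ (stv i₀ d i))
      exact hlab (stv i₀ d i)
  · have h1 := key χ (mem_subf_self χ) 0 (by omega)
    rw [Trace.suffix_zero, Trace.suffix_zero] at h1
    exact h1.mpr hχ
end Part3
section Part4
open LTLFormula
variable {AP : Type}

def topF : LTLFormula AP := LTLFormula.neg LTLFormula.bot
def conjF (φ ψ : LTLFormula AP) : LTLFormula AP := .neg (.disj (.neg φ) (.neg ψ))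
def implF (φ ψ : LTLFormula AP) : LTLFormula AP := .disj (.neg φ) ψ
def GF (φ : LTLFormula AP) : LTLFormula AP := .neg (.untl topF (.neg φ))
def bigConj : List (LTLFormula AP) → LTLFormula AP
  | [] => topF
  | φ :: l => conjF φ (bigConj l)

@[simp] lemma topF_sat (π : Trace AP) : (topF : LTLFormula AP).sat π := by
  simp [topF, LTLFormula.sat]

@[simp] lemma conjF_sat (φ ψ : LTLFormula AP) (π : Trace AP) :
    (conjF φ ψ).sat π ↔ φ.sat π ∧ ψ.sat π := by
  simp [conjF, LTLFormula.sat]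

@[simp] lemma implF_sat (φ ψ : LTLFormula AP) (π : Trace AP) :
    (implF φ ψ).sat π ↔ (φ.sat π → ψ.sat π) := by
  simp [implF, LTLFormula.sat]; tauto

@[simp] lemma GF_sat (φ : LTLFormula AP) (π : Trace AP) :
    (GF φ).sat π ↔ ∀ i, φ.sat (π.suffix i) := by
  simp [GF, LTLFormula.sat]

lemma bigConj_sat (l : List (LTLFormula AP)) (π : Trace AP) :
    (bigConj l).sat π ↔ ∀ φ ∈ l, φ.sat π := by
  induction l with
  | nil => simp [bigConj]
  | cons φ l ih => simp [bigConj, ih]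

lemma iterNext_sat (k : ℕ) (φ : LTLFormula AP) (π : Trace AP) :
    (LTLFormula.iterNext k φ).sat π ↔ φ.sat (π.suffix k) := by
  induction k generalizing π with
  | zero => rw [Trace.suffix_zero]; rfl
  | succ k ih =>
    show (LTLFormula.iterNext k φ).sat (π.suffix 1) ↔ _
    rw [ih, Trace.suffix_suffix, Nat.add_comm]

/-- formula pinning down the exact label at the current position -/
noncomputable def exactLabel [Fintype AP] (a : Set AP) : LTLFormula AP :=
  bigConj ((Finset.univ : Finset AP).toList.map fun p =>
    @ite _ (p ∈ a) (Classical.propDecidable _) (.atom p) (.neg (.atom p)))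

lemma exactLabel_sat [Fintype AP] (a : Set AP) (π : Trace AP) :
    (exactLabel a).sat π ↔ π 0 = a := by
  rw [exactLabel, bigConj_sat]
  simp only [List.mem_map]
  constructor
  · intro h
    ext p
    have := h _ ⟨p, by simp, rfl⟩
    by_cases hp : p ∈ a
    · rw [if_pos hp] at this
      exact ⟨fun _ => hp, fun _ => this⟩
    · rw [if_neg hp] at this
      exact ⟨fun hh => absurd hh this, fun hh => absurd hh hp⟩
  · rintro rfl φ ⟨p, _, rfl⟩
    by_cases hp : p ∈ π 0
    · rw [if_pos hp]; exact hp
    · rw [if_neg hp]; exact hp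

/-- characteristic formula of the ultimately periodic trace with prefix `c`,
period `d`, values given by `π` -/
noncomputable def charForm [Fintype AP] (π : Trace AP) (c d : ℕ) : LTLFormula AP :=
  conjF
    (bigConj ((List.range (c + d)).map fun i => LTLFormula.iterNext i (exactLabel (π i))))
    (LTLFormula.iterNext c (GF (bigConj ((Finset.univ : Finset AP).toList.map fun p =>
      conjF (implF (.atom p) (LTLFormula.iterNext d (.atom p)))
            (implF (LTLFormula.iterNext d (.atom p)) (.atom p))))))

lemma charForm_sat [Fintype AP] (π : Trace AP) (c d : ℕ) (hd : 0 < d)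
    (hper : ∀ i, c ≤ i → π (i + d) = π i) (σ : Trace AP) :
    (charForm π c d).sat σ ↔ σ = π := by
  have hexp : (charForm π c d).sat σ ↔
      (∀ i < c + d, σ i = π i) ∧ (∀ m p, p ∈ σ (c + m) ↔ p ∈ σ (c + m + d)) := by
    rw [charForm, conjF_sat, bigConj_sat, iterNext_sat, GF_sat]
    constructor
    · rintro ⟨h1, h2⟩
      constructor
      · intro i hi
        have := h1 _ (List.mem_map.mpr ⟨i, List.mem_range.mpr hi, rfl⟩)
        rw [iterNext_sat] at this
        rw [exactLabel_sat] at this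
        simpa [Trace.suffix] using this
      · intro m p
        have := h2 m
        rw [bigConj_sat] at this
        have := this _ (List.mem_map.mpr ⟨p, by simp, rfl⟩)
        rw [conjF_sat, implF_sat, implF_sat, iterNext_sat] at this
        obtain ⟨ha, hb⟩ := this
        simp only [Trace.suffix_suffix] at ha hb
        constructor
        · intro hp
          have := ha (by simpa [LTLFormula.sat, Trace.suffix] using hp)
          simpa [LTLFormula.sat, Trace.suffix, Nat.add_assoc, Nat.add_comm, Nat.add_left_comm] using this
        · intro hp
          have := hb (by simpa [LTLFormula.sat, Trace.suffix, Nat.add_assoc, Nat.add_comm, Nat.add_left_comm] using hp)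
          simpa [LTLFormula.sat, Trace.suffix] using this
    · rintro ⟨h1, h2⟩
      constructor
      · intro φ hφ
        obtain ⟨i, hi, rfl⟩ := List.mem_map.mp hφ
        rw [iterNext_sat, exactLabel_sat]
        show σ (i + 0) = π i
        rw [Nat.add_zero]
        exact h1 i (List.mem_range.mp hi)
      · intro m
        rw [bigConj_sat]
        intro φ hφ
        obtain ⟨p, _, rfl⟩ := List.mem_map.mp hφ
        rw [conjF_sat, implF_sat, implF_sat, iterNext_sat]
        simp only [Trace.suffix_suffix]
        have := h2 m p
        constructor
        · intro hp
          show p ∈ σ (c + m + d + 0)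
          rw [Nat.add_zero]
          exact this.mp (by simpa [LTLFormula.sat, Trace.suffix] using hp)
        · intro hp
          show p ∈ σ (c + m + 0)
          rw [Nat.add_zero]
          refine this.mpr ?_
          simpa [LTLFormula.sat, Trace.suffix, Nat.add_assoc, Nat.add_comm, Nat.add_left_comm] using hp
  rw [hexp]
  constructor
  · rintro ⟨h1, h2⟩
    funext i
    induction i using Nat.strong_induction_on with
    | _ i ih =>
      by_cases hi : i < c + d
      · exact h1 i hi
      · have e1 : σ i = σ (i - d) := by
          ext p
          have := h2 (i - d - c) p
          have ha : c + (i - d - c) = i - d := by omega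
          have hb : c + (i - d - c) + d = i := by omega
          rw [hb, ha] at this
          exact this.symm
        have e2 : π (i - d) = π i := by
          have := hper (i - d) (by omega)
          have hc : i - d + d = i := by omega
          rw [hc] at this
          exact this.symm
        rw [e1, ih (i - d) (by omega), e2]
  · rintro rfl
    refine ⟨fun i _ => rfl, fun m p => ?_⟩
    rw [hper (c + m) (by omega)]
end Part4
section Part5
open LTLFormula
variable {AP : Type}

lemma exists_trace (M : Kripke AP) : ∃ π, π ∈ M.traces := by
  classical
  obtain ⟨s₀, hs₀⟩ := M.init_nonempty
  choose f hf using M.trans_total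
  refine ⟨fun i => M.label (f^[i] s₀), fun i => f^[i] s₀, ?_, ?_, fun i => rfl⟩
  · simpa using hs₀
  · intro i
    show M.trans (f^[i] s₀) (f^[i+1] s₀)
    rw [Function.iterate_succ_apply']
    exact hf _

lemma lasso_sat (π : Trace AP) (c d : ℕ) (hd : 0 < d)
    (hper : ∀ i, c ≤ i → π (i + d) = π i) (φ : LTLFormula AP) :
    (lassoK π c d hd).sat φ ↔ φ.sat π := by
  unfold Kripke.sat
  rw [lassoK_traces π c d hd hper]
  simp

lemma cn_mono (X Y : Set (LTLFormula AP)) (h : X ⊆ Y) : CnLTL AP X ⊆ CnLTL AP Y :=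
  fun ψ hψ M hM => hψ M (fun φ hφ => hM φ (h hφ))

lemma cn_ext (X : Set (LTLFormula AP)) : X ⊆ CnLTL AP X :=
  fun φ hφ M hM => hM φ hφ

lemma cn_idem (X : Set (LTLFormula AP)) : CnLTL AP (CnLTL AP X) = CnLTL AP X := by
  apply Set.Subset.antisymm
  · intro ψ hψ M hM
    exact hψ M (fun φ hφ => hφ M hM)
  · exact cn_ext _

lemma consistent_has_model (K : Set (LTLFormula AP)) (hth : CnLTL AP K = K)
    (hne : K ≠ Set.univ) : ∃ M : Kripke AP, M.satSet K := by
  by_contra h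
  push_neg at h
  apply hne
  rw [← hth]
  exact Set.eq_univ_of_forall (fun ψ M hM => absurd hM (h M))

/-- every model of `K` where `K` is complete gives `K = Th(π)` for its traces -/
lemma theory_eq_of_trace (K : Set (LTLFormula AP))
    (hcomp : ∀ φ, φ ∈ K ∨ LTLFormula.neg φ ∈ K)
    (M : Kripke AP) (hM : M.satSet K) (π : Trace AP) (hπ : π ∈ M.traces) :
    ∀ χ, χ ∈ K ↔ χ.sat π := by
  intro χ
  constructor
  · intro h; exact hM χ h π hπ
  · intro h
    rcases hcomp χ with h' | h'
    · exact h'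
    · exact absurd h (hM _ h' π hπ)

theorem ltl_is_compendious' (AP : Type) [Fintype AP] [Nonempty AP] :
    Tarskian (CnLTL AP) ∧
    BooleanLogic (CnLTL AP) LTLFormula.neg LTLFormula.disj ∧
    (∀ p : AP, ∀ i j : ℕ, i ≠ j →
      CnLTL AP {LTLFormula.iterNext i (LTLFormula.atom p)} ≠
        CnLTL AP {LTLFormula.iterNext j (LTLFormula.atom p)}) ∧
    ({K : Set (LTLFormula AP) | CnLTL AP K = K}).Infinite ∧
    Discerning (CnLTL AP) LTLFormula.neg := by
  classical
  -- non-equivalence of the X^i p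
  have hnoneq : ∀ p : AP, ∀ i j : ℕ, i ≠ j →
      CnLTL AP {LTLFormula.iterNext i (LTLFormula.atom p)} ≠
        CnLTL AP {LTLFormula.iterNext j (LTLFormula.atom p)} := by
    intro p i j hij heq
    set πj : Trace AP := fun k => if k = j then Set.univ else ∅ with hπj
    have hper : ∀ k, j + 1 ≤ k → πj (k + 1) = πj k := by
      intro k hk
      simp only [hπj]
      rw [if_neg (by omega), if_neg (by omega)]
    have hsatj : (lassoK πj (j+1) 1 one_pos).satSet {LTLFormula.iterNext j (LTLFormula.atom p)} := by
      intro φ' hφ'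
      rw [Set.mem_singleton_iff] at hφ'
      subst hφ'
      rw [lasso_sat πj (j+1) 1 one_pos hper, iterNext_sat]
      show p ∈ πj (j + 0)
      simp [hπj]
    have hmem : LTLFormula.iterNext i (LTLFormula.atom p) ∈
        CnLTL AP {LTLFormula.iterNext j (LTLFormula.atom p)} := by
      rw [← heq]
      exact cn_ext _ rfl
    have h2 := hmem _ hsatj
    rw [lasso_sat πj (j+1) 1 one_pos hper, iterNext_sat] at h2
    have : p ∈ πj (i + 0) := h2
    simp only [hπj, Nat.add_zero] at this
    rw [if_neg hij] at this
    exact this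
  refine ⟨⟨cn_mono, cn_ext, cn_idem⟩, ⟨?_, ?_, ?_, ?_⟩, hnoneq, ?_, ?_⟩
  · -- (¬T)
    intro φ
    apply Set.Subset.antisymm
    · rintro ψ₀ ⟨h1, h2⟩
      intro M _ π hπ
      by_contra hcon
      obtain ⟨π', hπ', ⟨c, d, hd, hper⟩, hsat'⟩ :=
        small_model M π hπ (LTLFormula.neg ψ₀) hcon
      by_cases hφ : φ.sat π'
      · have hs : (lassoK π' c d hd).satSet {φ} := by
          intro φ' hφ'
          rw [Set.mem_singleton_iff] at hφ'
          subst hφ'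
          rw [lasso_sat π' c d hd hper]
          exact hφ
        have := h1 _ hs π' (lassoK_mem π' c d hd hper)
        exact hsat' this
      · have hs : (lassoK π' c d hd).satSet {LTLFormula.neg φ} := by
          intro φ' hφ'
          rw [Set.mem_singleton_iff] at hφ'
          subst hφ'
          rw [lasso_sat π' c d hd hper]
          exact hφ
        have := h2 _ hs π' (lassoK_mem π' c d hd hper)
        exact hsat' this
    · intro ψ hψ
      exact ⟨cn_mono ∅ _ (Set.empty_subset _) hψ, cn_mono ∅ _ (Set.empty_subset _) hψ⟩
  · -- (¬I)
    intro φ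
    apply Set.eq_univ_of_forall
    intro ψ M hM
    obtain ⟨π, hπ⟩ := exists_trace M
    have h1 : φ.sat π := hM φ (Set.mem_insert _ _) π hπ
    have h2 : ¬ φ.sat π := hM (LTLFormula.neg φ) (Set.mem_insert_iff.mpr (Or.inr rfl)) π hπ
    exact absurd h1 h2
  · -- (∨I)
    intro X φ ψ h M hM π hπ
    exact Or.inl (h M hM π hπ)
  · -- (∨E)
    intro X α φ ψ h1 h2 M hM π hπ
    by_contra hcon
    obtain ⟨π', hπ', ⟨c, d, hd, hper⟩, hsat'⟩ :=
      small_model M π hπ (LTLFormula.neg α) hcon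
    have hdisj : φ.sat π' ∨ ψ.sat π' :=
      hM _ (Set.mem_union_right _ rfl) π' hπ'
    rcases hdisj with hφ | hψ
    · have hs : (lassoK π' c d hd).satSet (X ∪ {φ}) := by
        intro χ' hχ'
        rw [lasso_sat π' c d hd hper]
        rcases hχ' with hX | hsing
        · exact hM χ' (Set.mem_union_left _ hX) π' hπ'
        · rw [Set.mem_singleton_iff] at hsing; subst hsing; exact hφ
      exact hsat' (h1 _ hs π' (lassoK_mem π' c d hd hper))
    · have hs : (lassoK π' c d hd).satSet (X ∪ {ψ}) := by
        intro χ' hχ'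
        rw [lasso_sat π' c d hd hper]
        rcases hχ' with hX | hsing
        · exact hM χ' (Set.mem_union_left _ hX) π' hπ'
        · rw [Set.mem_singleton_iff] at hsing; subst hsing; exact hψ
      exact hsat' (h2 _ hs π' (lassoK_mem π' c d hd hper))
  · -- infinitely many theories
    have p : AP := Classical.arbitrary AP
    refine Set.infinite_of_injective_forall_mem
      (f := fun i : ℕ => CnLTL AP {LTLFormula.iterNext i (LTLFormula.atom p)}) ?_ ?_
    · intro a b hab
      by_contra hne
      exact hnoneq p a b hne hab
    · intro i
      exact cn_idem _
  · -- Discerning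
    have main : ∀ X Y : Set (Set (LTLFormula AP)),
        X ⊆ CCT (CnLTL AP) LTLFormula.neg → Y ⊆ CCT (CnLTL AP) LTLFormula.neg →
        ⋂₀ X = ⋂₀ Y → X ⊆ Y := by
      intro X Y hX hY hXY K hK
      obtain ⟨hth, hne, hcomp⟩ := hX hK
      obtain ⟨M, hM⟩ := consistent_has_model K hth hne
      obtain ⟨π0, hπ0⟩ := exists_trace M
      obtain ⟨π, hπ, ⟨c, d, hd, hper⟩, -⟩ := small_model M π0 hπ0 topF (topF_sat _)
      have hKTh := theory_eq_of_trace K hcomp M hM π hπ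
      by_contra hKY
      have hneg : LTLFormula.neg (charForm π c d) ∈ ⋂₀ Y := by
        apply Set.mem_sInter.mpr
        intro L hL
        obtain ⟨hthL, hneL, hcompL⟩ := hY hL
        rcases hcompL (charForm π c d) with h | h
        · exfalso
          apply hKY
          obtain ⟨M', hM'⟩ := consistent_has_model L hthL hneL
          obtain ⟨σ0, hσ0⟩ := exists_trace M'
          have hσπ : σ0 = π := (charForm_sat π c d hd hper σ0).mp (hM' _ h σ0 hσ0)
          have hπM' : π ∈ M'.traces := hσπ ▸ hσ0
          have hLTh := theory_eq_of_trace L hcompL M' hM' π hπM'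
          have hLK : L = K := Set.ext (fun χ => (hLTh χ).trans (hKTh χ).symm)
          rw [← hLK]
          exact hL
        · exact h
      rw [← hXY] at hneg
      have hinK := Set.mem_sInter.mp hneg K hK
      have hnsat : ¬ (charForm π c d).sat π := (hKTh _).mp hinK
      exact hnsat ((charForm_sat π c d hd hper π).mpr rfl)
    intro X Y hX hY hXY
    exact Set.Subset.antisymm (main X Y hX hY hXY) (main Y X hY hX hXY.symm)
end Part5

/-- LTL is compendious: `CnLTL` is Tarskian and Boolean, LTL is
non-finitary (witnessed by the pairwise non-equivalent formulae
`p, Xp, X²p, …`, so that there are infinitely many theories), and LTL is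
Discerning. -/
theorem ltl_is_compendious (AP : Type) [Fintype AP] [Nonempty AP] :
    Tarskian (CnLTL AP) ∧
    BooleanLogic (CnLTL AP) LTLFormula.neg LTLFormula.disj ∧
    (∀ p : AP, ∀ i j : ℕ, i ≠ j →
      CnLTL AP {LTLFormula.iterNext i (LTLFormula.atom p)} ≠
        CnLTL AP {LTLFormula.iterNext j (LTLFormula.atom p)}) ∧
    ({K : Set (LTLFormula AP) | CnLTL AP K = K}).Infinite ∧
    Discerning (CnLTL AP) LTLFormula.neg := by
  exact ltl_is_compendious' AP
end

section
/- The LTL theory Cn_LTL({F p}) is not expressible via a finite set of models: there is no finite set {M₁, …, Mₙ} of Kripke structures such that {φ ∈ Fm_LTL | Mᵢ ⊨ φ for all i = 1, …, n} = Cn_LTL({F p}), where F p abbreviates ⊤ U p and ⊤ := ¬⊥. -/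
/-- `F p` abbreviates `⊤ U p` where `⊤ := ¬⊥`. -/
def finallyAtom {AP : Type} (p : AP) : LTLFormula AP :=
  LTLFormula.untl (LTLFormula.neg LTLFormula.bot) (LTLFormula.atom p)

/-- `p` occurs within the first `k+1` positions. -/
def withinF {AP : Type} (p : AP) : ℕ → LTLFormula AP
  | 0 => .atom p
  | k+1 => .disj (.atom p) (.next (withinF p k))

lemma withinF_sat {AP : Type} (p : AP) (k : ℕ) (π : Trace AP) :
    (withinF p k).sat π ↔ ∃ j ≤ k, p ∈ π j := by
  induction k generalizing π with
  | zero =>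
    simp [withinF, LTLFormula.sat]
  | succ k ih =>
    simp only [withinF, LTLFormula.sat, ih, Trace.suffix]
    constructor
    · rintro (h | ⟨j, hj, hp⟩)
      · exact ⟨0, by omega, h⟩
      · exact ⟨j + 1, by omega, by simpa [Nat.add_comm] using hp⟩
    · rintro ⟨j, hj, hp⟩
      cases j with
      | zero => exact Or.inl hp
      | succ j => exact Or.inr ⟨j, by omega, by simpa [Nat.add_comm] using hp⟩

lemma finallyAtom_sat {AP : Type} (p : AP) (π : Trace AP) :
    (finallyAtom p).sat π ↔ ∃ i, p ∈ π i := by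
  simp [finallyAtom, LTLFormula.sat, Trace.suffix]

/-- Pumping: a finite Kripke structure satisfying `F p` satisfies `p` within
`M.n` steps on every trace. -/
lemma kripke_sat_within {AP : Type} (p : AP) (M : Kripke AP)
    (h : M.sat (finallyAtom p)) : M.sat (withinF p M.n) := by
  intro π hπ
  rw [withinF_sat]
  by_contra hc
  push_neg at hc
  obtain ⟨ρ, h0, hT, hL⟩ := hπ
  have hnpos : 0 < M.n := (ρ 0).pos
  -- pigeonhole: the first M.n+1 states contain a repeat
  obtain ⟨x, y, hxy, heq⟩ :=
    Fintype.exists_ne_map_eq_of_card_lt (fun i : Fin (M.n + 1) => ρ i) (by simp)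
  obtain ⟨a, b, hab, hbn, hρab⟩ :
      ∃ a b : ℕ, a < b ∧ b ≤ M.n ∧ ρ a = ρ b := by
    rcases lt_or_gt_of_ne (fun hxyv => hxy (Fin.ext hxyv) : (x:ℕ) ≠ (y:ℕ)) with hl | hl
    · exact ⟨x, y, hl, by omega, heq⟩
    · exact ⟨y, x, hl, by omega, heq.symm⟩
  -- pump the p-free prefix into a p-free trace
  set g : ℕ → ℕ := fun i => if i < b then i else a + (i - a) % (b - a) with hg
  have hglt : ∀ i, g i < b := by
    intro i
    simp only [hg]
    split
    · omega
    · have := Nat.mod_lt (i - a) (y := b - a) (by omega)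
      omega
  have hstep : ∀ i, ρ (g (i + 1)) = ρ (g i + 1) := by
    intro i
    rcases lt_trichotomy (i + 1) b with h1 | h1 | h1
    · simp only [hg, if_pos h1, if_pos (by omega : i < b)]
    · have hgi : g i = i := by simp only [hg]; rw [if_pos (by omega)]
      have h2 : g (i + 1) = a := by
        simp only [hg]
        rw [if_neg (by omega)]
        have hba : i + 1 - a = b - a := by omega
        rw [hba, Nat.mod_self]
        omega
      rw [hgi, h2, hρab]
      congr 1
      omega
    · have hib : ¬ i < b := by omega
      have hib1 : ¬ i + 1 < b := by omega
      set r := (i - a) % (b - a) with hr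
      have hrlt : r < b - a := Nat.mod_lt _ (by omega)
      have hi1 : i + 1 - a = (i - a) + 1 := by omega
      have hq := Nat.div_add_mod (i - a) (b - a)
      rcases Nat.lt_or_ge (r + 1) (b - a) with hcase | hcase
      · have hmod : (i + 1 - a) % (b - a) = r + 1 := by
          have h1m : (1 : ℕ) % (b - a) = 1 := Nat.mod_eq_of_lt (by omega)
          rw [hi1, Nat.add_mod, ← hr, h1m, Nat.mod_eq_of_lt hcase]
        have h2 : g (i + 1) = a + (r + 1) := by
          simp only [hg]; rw [if_neg hib1, hmod]
        have h3 : g i + 1 = a + (r + 1) := by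
          simp only [hg]; rw [if_neg hib]; omega
        rw [h2, h3]
      · have hreq : r = b - a - 1 := by omega
        have hmod : (i + 1 - a) % (b - a) = 0 := by
          have hrepr : i + 1 - a = ((i - a) / (b - a) + 1) * (b - a) := by
            rw [Nat.add_mul, Nat.one_mul, Nat.mul_comm]; omega
          rw [hrepr, Nat.mul_mod_left]
        have h2 : g (i + 1) = a := by
          simp only [hg]; rw [if_neg hib1, hmod]; omega
        have h3 : g i + 1 = b := by
          simp only [hg]; rw [if_neg hib]; omega
        rw [h2, h3, hρab]
  -- the pumped trace
  set π' : Trace AP := fun i => M.label (ρ (g i)) with hπ'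
  have hmem : π' ∈ M.traces := by
    refine ⟨fun i => ρ (g i), ?_, ?_, fun i => rfl⟩
    · show ρ (g 0) ∈ M.init
      have hg0 : g 0 = 0 := by simp only [hg]; rw [if_pos (by omega)]
      rw [hg0]; exact h0
    · intro i
      show M.trans (ρ (g i)) (ρ (g (i + 1)))
      rw [hstep i]
      exact hT (g i)
  have := h π' hmem
  rw [finallyAtom_sat] at this
  obtain ⟨i, hi⟩ := this
  have hgi : g i ≤ M.n := by have := hglt i; omega
  have : p ∉ π' i := by
    have := hc (g i) hgi
    rw [hL (g i)] at this
    exact this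
  exact this hi

/-- A Kripke structure that delays `p` for `K+1` steps, then loops on `p`. -/
def delayK (AP : Type) (p : AP) (K : ℕ) : Kripke AP where
  n := K + 2
  init := {⟨0, by omega⟩}
  init_nonempty := ⟨_, rfl⟩
  trans s s' := (s' : ℕ) = min ((s : ℕ) + 1) (K + 1)
  trans_total s := ⟨⟨min ((s : ℕ) + 1) (K + 1), by omega⟩, rfl⟩
  label s := if (s : ℕ) = K + 1 then {p} else ∅

lemma delayK_run {AP : Type} (p : AP) (K : ℕ) (ρ : ℕ → Fin (K + 2))
    (h0 : ρ 0 ∈ (delayK AP p K).init)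
    (hT : ∀ i, (delayK AP p K).trans (ρ i) (ρ (i + 1))) :
    ∀ i, (ρ i : ℕ) = min i (K + 1) := by
  intro i
  induction i with
  | zero =>
    have : ρ 0 = ⟨0, by omega⟩ := h0
    rw [this]
    simp
  | succ i ih =>
    have := hT i
    simp only [delayK] at this
    rw [this, ih]
    omega

lemma delayK_mem_iff {AP : Type} (p : AP) (K : ℕ) (π : Trace AP)
    (hπ : π ∈ (delayK AP p K).traces) : ∀ i, (p ∈ π i ↔ K + 1 ≤ i) := by
  obtain ⟨ρ, h0, hT, hL⟩ := hπ
  have hrun := delayK_run p K ρ h0 hT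
  intro i
  rw [hL i]
  simp only [delayK]
  rcases Nat.lt_or_ge i (K + 1) with hi | hi
  · rw [if_neg (by rw [hrun i]; omega)]
    simp
    omega
  · rw [if_pos (by rw [hrun i]; omega)]
    simp
    omega

lemma delayK_satF {AP : Type} (p : AP) (K : ℕ) :
    (delayK AP p K).sat (finallyAtom p) := by
  intro π hπ
  rw [finallyAtom_sat]
  exact ⟨K + 1, (delayK_mem_iff p K π hπ (K + 1)).2 le_rfl⟩

lemma delayK_not_within {AP : Type} (p : AP) (K : ℕ) :
    ¬ (delayK AP p K).sat (withinF p K) := by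
  intro h
  set ρ : ℕ → Fin (K + 2) := fun i => ⟨min i (K + 1), by omega⟩ with hρ
  set π : Trace AP := fun i => (delayK AP p K).label (ρ i) with hπ
  have hmem : π ∈ (delayK AP p K).traces := by
    refine ⟨ρ, ?_, ?_, fun i => rfl⟩
    · simp only [hρ, delayK]
      exact congrArg _ (by simp)
    · intro i
      simp only [hρ, delayK]
      omega
  have := h π hmem
  rw [withinF_sat] at this
  obtain ⟨j, hj, hp⟩ := this
  have := (delayK_mem_iff p K π hmem j).1 hp
  omega

/-- the theory `Cn_LTL({F p})` is not expressible by a finite set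
of models: no finite family of Kripke structures has exactly the formulae of
`Cn_LTL({F p})` as its common satisfied formulae. -/
theorem finally_not_expressible_by_finite_models (AP : Type) [Fintype AP]
    [Nonempty AP] (p : AP) :
    ¬ ∃ (n : ℕ) (M : Fin n → Kripke AP),
        {φ : LTLFormula AP | ∀ i : Fin n, (M i).sat φ} =
          CnLTL AP {finallyAtom p} := by
  rintro ⟨n, M, hEq⟩
  have hF : ∀ i, (M i).sat (finallyAtom p) := by
    have hmem : finallyAtom p ∈ CnLTL AP {finallyAtom p} :=
      fun N hN => hN _ rfl
    rw [← hEq] at hmem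
    exact hmem
  set K := Finset.univ.sup (fun i : Fin n => (M i).n) with hK
  have hW : withinF p K ∈ {φ : LTLFormula AP | ∀ i : Fin n, (M i).sat φ} := by
    intro i π hπ
    rw [withinF_sat]
    have h2 := kripke_sat_within p (M i) (hF i) π hπ
    rw [withinF_sat] at h2
    obtain ⟨j, hj, hp⟩ := h2
    exact ⟨j, le_trans hj (Finset.le_sup (f := fun i => (M i).n) (Finset.mem_univ i)), hp⟩
  rw [hEq] at hW
  have hsatSet : (delayK AP p K).satSet {finallyAtom p} := by
    intro φ hφ
    rw [Set.mem_singleton_iff] at hφ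
    rw [hφ]
    exact delayK_satF p K
  exact delayK_not_within p K (hW _ hsatSet)
end

section
/- The support of a Büchi automaton over 𝒫(AP) is an LTL theory: for every Büchi automaton A, Cn_LTL(supp(A)) = supp(A). -/
/-- The support of a Büchi automaton over `𝒫(AP)`: the LTL formulae satisfied
by every accepted trace. -/
def Buchi.supp {AP : Type} (B : Buchi (Set AP)) : Set (LTLFormula AP) :=
  {φ | ∀ π ∈ B.lang, φ.sat π}
open LTLFormula

attribute [local instance] Classical.propDecidable

namespace LTLSupp

variable {AP : Type}

lemma suffix_suffix (π : Trace AP) (a b : ℕ) : (π.suffix a).suffix b = π.suffix (a + b) := by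
  funext k; simp [Trace.suffix, Nat.add_assoc]

lemma suffix_zero (π : Trace AP) : π.suffix 0 = π := by funext k; simp [Trace.suffix]

/-- step-unfolding for until, backward -/
lemma untl_step {α β : LTLFormula AP} {σ : Trace AP}
    (h1 : α.sat σ) (h2 : (untl α β).sat (σ.suffix 1)) : (untl α β).sat σ := by
  obtain ⟨k, hβ, hα⟩ := h2
  refine ⟨k + 1, ?_, ?_⟩
  · rwa [suffix_suffix, Nat.add_comm] at hβ
  · intro l hl
    cases l with
    | zero => rwa [suffix_zero]
    | succ l =>
      have := hα l (by omega)
      rwa [suffix_suffix, Nat.add_comm] at this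

/-- minimal witness for until -/
lemma untl_min {α β : LTLFormula AP} {σ : Trace AP} (h : (untl α β).sat σ) :
    ∃ k, β.sat (σ.suffix k) ∧ (∀ l < k, α.sat (σ.suffix l)) ∧
      (∀ l, β.sat (σ.suffix l) → k ≤ l) := by
  obtain ⟨k₀, hβ, hα⟩ := h
  have hex : ∃ k, β.sat (σ.suffix k) := ⟨k₀, hβ⟩
  refine ⟨Nat.find hex, Nat.find_spec hex, ?_, ?_⟩
  · intro l hl
    exact hα l (lt_of_lt_of_le hl (Nat.find_min' hex hβ))
  · intro l hl; exact Nat.find_min' hex hl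

/-- shift an until along a β-free prefix -/
lemma untl_shift {α β : LTLFormula AP} {σ : Trace AP} (h : (untl α β).sat σ)
    (c : ℕ) (hc : ∀ l < c, ¬ β.sat (σ.suffix l)) : (untl α β).sat (σ.suffix c) := by
  obtain ⟨k, hβ, hα, hmin⟩ := untl_min h
  have hck : c ≤ k := by
    by_contra hcon
    exact hc k (by omega) hβ
  refine ⟨k - c, ?_, ?_⟩
  · rw [suffix_suffix]; rwa [show c + (k - c) = k by omega]
  · intro l hl; rw [suffix_suffix]; exact hα (c + l) (by omega)

/-- subformula list -/
def subf : LTLFormula AP → List (LTLFormula AP)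
  | .bot => [.bot]
  | .atom p => [.atom p]
  | .neg φ => .neg φ :: subf φ
  | .disj φ χ => .disj φ χ :: (subf φ ++ subf χ)
  | .next φ => .next φ :: subf φ
  | .untl φ χ => .untl φ χ :: (subf φ ++ subf χ)

lemma mem_subf_self (φ : LTLFormula AP) : φ ∈ subf φ := by
  cases φ <;> simp [subf]

lemma subf_trans : ∀ {ψ φ χ : LTLFormula AP}, φ ∈ subf ψ → χ ∈ subf φ → χ ∈ subf ψ := by
  intro ψ
  induction ψ with
  | bot => intro φ χ h1 h2; simp [subf] at h1; subst h1; exact h2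
  | atom p => intro φ χ h1 h2; simp [subf] at h1; subst h1; exact h2
  | neg ψ ih =>
    intro φ χ h1 h2
    simp [subf] at h1 ⊢
    rcases h1 with h1 | h1
    · subst h1; simp [subf] at h2; tauto
    · exact Or.inr (ih h1 h2)
  | disj ψ₁ ψ₂ ih1 ih2 =>
    intro φ χ h1 h2
    simp [subf] at h1 ⊢
    rcases h1 with h1 | h1 | h1
    · subst h1; simp [subf] at h2; tauto
    · exact Or.inr (Or.inl (ih1 h1 h2))
    · exact Or.inr (Or.inr (ih2 h1 h2))
  | next ψ ih =>
    intro φ χ h1 h2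
    simp [subf] at h1 ⊢
    rcases h1 with h1 | h1
    · subst h1; simp [subf] at h2; tauto
    · exact Or.inr (ih h1 h2)
  | untl ψ₁ ψ₂ ih1 ih2 =>
    intro φ χ h1 h2
    simp [subf] at h1 ⊢
    rcases h1 with h1 | h1 | h1
    · subst h1; simp [subf] at h2; tauto
    · exact Or.inr (Or.inl (ih1 h1 h2))
    · exact Or.inr (Or.inr (ih2 h1 h2))

lemma neg_mem_subf {ψ φ : LTLFormula AP} (h : .neg φ ∈ subf ψ) : φ ∈ subf ψ :=
  subf_trans h (List.mem_cons_of_mem _ (mem_subf_self _))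
lemma disj_mem_subf {ψ φ χ : LTLFormula AP} (h : .disj φ χ ∈ subf ψ) :
    φ ∈ subf ψ ∧ χ ∈ subf ψ :=
  ⟨subf_trans h (by simp [subf]; exact Or.inr (Or.inl (mem_subf_self _))),
   subf_trans h (by simp [subf]; exact Or.inr (Or.inr (mem_subf_self _)))⟩
lemma next_mem_subf {ψ φ : LTLFormula AP} (h : .next φ ∈ subf ψ) : φ ∈ subf ψ :=
  subf_trans h (List.mem_cons_of_mem _ (mem_subf_self _))
lemma untl_mem_subf {ψ φ χ : LTLFormula AP} (h : .untl φ χ ∈ subf ψ) :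
    φ ∈ subf ψ ∧ χ ∈ subf ψ :=
  ⟨subf_trans h (by simp [subf]; exact Or.inr (Or.inl (mem_subf_self _))),
   subf_trans h (by simp [subf]; exact Or.inr (Or.inr (mem_subf_self _)))⟩

end LTLSupp
namespace LTLSupp

set_option linter.unusedSectionVars false

/-- the pumping index map: identity below `i`, then loops through `[i, j)` -/
def gm (i j m : ℕ) : ℕ := if m < i then m else i + (m - i) % (j - i)

section gmLemmas

variable {i j : ℕ} (hij : i < j)
include hij

lemma gm_lt (m : ℕ) : gm i j m < j := by
  unfold gm
  split
  · omega
  · have : (m - i) % (j - i) < j - i := Nat.mod_lt _ (by omega)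
    omega

lemma gm_eq_of_lt {m : ℕ} (h : m < j) : gm i j m = m := by
  unfold gm
  split
  · rfl
  · rw [Nat.mod_eq_of_lt (by omega)]; omega

lemma gm_zero : gm i j 0 = 0 := gm_eq_of_lt hij (by omega)

lemma gm_ge {m : ℕ} (h : i ≤ m) : i ≤ gm i j m := by
  unfold gm; split <;> omega

lemma gm_add {m : ℕ} (h : i ≤ m) (l : ℕ) :
    gm i j (m + l) = i + ((m - i) % (j - i) + l) % (j - i) := by
  unfold gm
  rw [if_neg (by omega)]
  congr 1
  rw [Nat.mod_add_mod]
  congr 1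
  omega

lemma gm_succ_low {m : ℕ} (h : gm i j m < j - 1) : gm i j (m + 1) = gm i j m + 1 := by
  rcases Nat.lt_or_ge m i with hm | hm
  · have h1 : gm i j m = m := gm_eq_of_lt hij (by omega)
    have h2 : gm i j (m + 1) = m + 1 := gm_eq_of_lt hij (by omega)
    omega
  · have hg : gm i j m = i + (m - i) % (j - i) := by unfold gm; rw [if_neg (by omega)]
    have hr : (m - i) % (j - i) + 1 < j - i := by omega
    rw [gm_add hij hm 1, Nat.mod_eq_of_lt hr, hg]
    omega

lemma gm_succ_high {m : ℕ} (h : gm i j m = j - 1) : gm i j (m + 1) = i := by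
  rcases Nat.lt_or_ge m i with hm | hm
  · have h1 : gm i j m = m := gm_eq_of_lt hij (by omega)
    omega
  · have hg : gm i j m = i + (m - i) % (j - i) := by unfold gm; rw [if_neg (by omega)]
    have hr : (m - i) % (j - i) + 1 = j - i := by omega
    rw [gm_add hij hm 1, hr]
    simp

lemma gm_succ_comm (m : ℕ) : gm i j (m + 1) = gm i j (gm i j m + 1) := by
  rcases Nat.lt_or_ge (gm i j m) (j - 1) with h | h
  · rw [gm_succ_low hij h,
      show gm i j (gm i j m + 1) = gm i j m + 1 from gm_eq_of_lt hij (by omega)]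
  · have h' : gm i j m = j - 1 := by have := gm_lt hij m; omega
    rw [gm_succ_high hij h', h', show j - 1 + 1 = j by omega]
    unfold gm
    rw [if_neg (by omega)]
    simp [Nat.mod_self]

/-- identity chain: if `gm i j m + l` stays below `j`, the map is a shifted identity -/
lemma gm_add_of_lt {m : ℕ} (l : ℕ) (h : gm i j m + l < j) :
    gm i j (m + l) = gm i j m + l := by
  induction l with
  | zero => rfl
  | succ l ih =>
    have h' : gm i j m + l < j := by omega
    rw [show m + (l+1) = (m + l) + 1 by omega, gm_succ_low hij (by rw [ih h']; omega), ih h']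
    omega

/-- periodicity on the loop -/
lemma gm_period {m : ℕ} (h : i ≤ m) (k : ℕ) : gm i j (m + (j - i) * k) = gm i j m := by
  rw [gm_add hij h, show (m - i) % (j-i) + (j-i)*k = (m-i) % (j-i) + k*(j-i) by ring,
    Nat.add_mul_mod_self_right, Nat.mod_mod_of_dvd _ dvd_rfl]
  unfold gm
  rw [if_neg (by omega)]

/-- the wrap-around: from a loop position `t = gm i j m`, after `(j - t) + l'` more
steps (with `i + l' < j`) we are at `i + l'`. -/
lemma gm_wrap {m : ℕ} (h : i ≤ m) {l' : ℕ} (hl' : i + l' < j) :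
    gm i j (m + ((j - gm i j m) + l')) = i + l' := by
  have hg : gm i j m = i + (m - i) % (j - i) := by unfold gm; rw [if_neg (by omega)]
  have hr : (m - i) % (j - i) < j - i := Nat.mod_lt _ (by omega)
  rw [gm_add hij h]
  rw [hg]
  have : (m - i) % (j - i) + (j - (i + (m - i) % (j - i)) + l') = (j - i) + l' := by omega
  rw [this, Nat.add_comm (j-i) l', Nat.add_mod_right, Nat.mod_eq_of_lt (by omega)]

end gmLemmas

end LTLSupp
namespace LTLSupp

variable {AP : Type}

/-- the pumped trace: follows `π` to `j`, then repeats the window `[i, j)` forever -/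
def pump (π : Trace AP) (i j : ℕ) : Trace AP := fun m => π (gm i j m)

section UntilHelpers

variable {π : Trace AP} {i j : ℕ} {α β : LTLFormula AP}

/-- until transfers from the pumped trace back to `π` -/
lemma untl_pump_to_pi (hij : i < j)
    (hα : ∀ m, α.sat ((pump π i j).suffix m) ↔ α.sat (π.suffix (gm i j m)))
    (hβ : ∀ m, β.sat ((pump π i j).suffix m) ↔ β.sat (π.suffix (gm i j m)))
    (hagU : (LTLFormula.untl α β).sat (π.suffix i) ↔ (LTLFormula.untl α β).sat (π.suffix j)) :
    ∀ m, (LTLFormula.untl α β).sat ((pump π i j).suffix m) →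
      (LTLFormula.untl α β).sat (π.suffix (gm i j m)) := by
  suffices H : ∀ k m, β.sat ((pump π i j).suffix (m + k)) →
      (∀ l < k, α.sat ((pump π i j).suffix (m + l))) →
      (LTLFormula.untl α β).sat (π.suffix (gm i j m)) by
    intro m h
    obtain ⟨k, hb, ha⟩ := h
    refine H k m ?_ ?_
    · rwa [suffix_suffix] at hb
    · intro l hl; have := ha l hl; rwa [suffix_suffix] at this
  intro k
  induction k with
  | zero =>
    intro m hb _
    exact ⟨0, by rwa [suffix_suffix, Nat.add_zero, ← hβ m], fun l hl => by omega⟩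
  | succ k ih =>
    intro m hb ha
    have hαm : α.sat (π.suffix (gm i j m)) := (hα m).mp (by
      have := ha 0 (by omega); rwa [Nat.add_zero] at this)
    have hU1 : (LTLFormula.untl α β).sat (π.suffix (gm i j (m + 1))) := by
      refine ih (m + 1) ?_ ?_
      · rwa [show m + (k + 1) = m + 1 + k by omega] at hb
      · intro l hl
        have := ha (l + 1) (by omega)
        rwa [show m + (l + 1) = m + 1 + l by omega] at this
    rcases Nat.lt_or_ge (gm i j m) (j - 1) with hc | hc
    · rw [gm_succ_low hij hc] at hU1
      exact untl_step hαm (by rwa [suffix_suffix])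
    · have hc' : gm i j m = j - 1 := by have := gm_lt hij m; omega
      rw [gm_succ_high hij hc'] at hU1
      have hUj := hagU.mp hU1
      refine untl_step hαm ?_
      rw [suffix_suffix, hc', show j - 1 + 1 = j by omega]
      exact hUj

/-- until transfers from `π` to the pumped trace -/
lemma untl_pi_to_pump (hij : i < j)
    (hα : ∀ m, α.sat ((pump π i j).suffix m) ↔ α.sat (π.suffix (gm i j m)))
    (hβ : ∀ m, β.sat ((pump π i j).suffix m) ↔ β.sat (π.suffix (gm i j m)))
    (hagU : (LTLFormula.untl α β).sat (π.suffix i) ↔ (LTLFormula.untl α β).sat (π.suffix j))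
    (hfulU : (LTLFormula.untl α β).sat (π.suffix i) →
      ∃ s, i ≤ s ∧ s < j ∧ β.sat (π.suffix s)) :
    ∀ m, (LTLFormula.untl α β).sat (π.suffix (gm i j m)) →
      (LTLFormula.untl α β).sat ((pump π i j).suffix m) := by
  have loop : ∀ m, i ≤ m → (LTLFormula.untl α β).sat (π.suffix (gm i j m)) →
      (LTLFormula.untl α β).sat ((pump π i j).suffix m) := by
    intro m hm h
    have hti : i ≤ gm i j m := gm_ge hij hm
    have htj : gm i j m < j := gm_lt hij m
    obtain ⟨k₀, hb0, ha0, hmin⟩ := untl_min h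
    rw [suffix_suffix] at hb0
    by_cases hcase : gm i j m + k₀ < j
    · refine ⟨k₀, ?_, ?_⟩
      · rw [suffix_suffix]
        apply (hβ _).mpr
        rwa [gm_add_of_lt hij k₀ hcase]
      · intro l hl
        rw [suffix_suffix]
        apply (hα _).mpr
        rw [gm_add_of_lt hij l (by omega)]
        have := ha0 l hl
        rwa [suffix_suffix] at this
    · have hnoβ : ∀ s, gm i j m ≤ s → s < j → ¬ β.sat (π.suffix s) := by
        intro s hs1 hs2 hbs
        have := hmin (s - gm i j m)
          (by rw [suffix_suffix, show gm i j m + (s - gm i j m) = s by omega]; exact hbs)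
        omega
      have hUj : (LTLFormula.untl α β).sat (π.suffix j) := by
        have := untl_shift h (j - gm i j m) (fun l hl => by
          rw [suffix_suffix]; exact hnoβ (gm i j m + l) (by omega) (by omega))
        rwa [suffix_suffix, show gm i j m + (j - gm i j m) = j by omega] at this
      have hUi := hagU.mpr hUj
      obtain ⟨s₁, hs₁i, hs₁j, hbs₁⟩ := hfulU hUi
      obtain ⟨k₁, hb1, ha1, hmin1⟩ := untl_min hUi
      rw [suffix_suffix] at hb1
      have hk₁lt : i + k₁ < j := by
        have := hmin1 (s₁ - i)
          (by rw [suffix_suffix, show i + (s₁ - i) = s₁ by omega]; exact hbs₁)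
        omega
      have hk₁t : i + k₁ < gm i j m := by
        by_contra hcon
        exact hnoβ (i + k₁) (by omega) hk₁lt hb1
      refine ⟨(j - gm i j m) + k₁, ?_, ?_⟩
      · rw [suffix_suffix]
        apply (hβ _).mpr
        rwa [gm_wrap hij hm hk₁lt]
      · intro l hl
        rw [suffix_suffix]
        apply (hα _).mpr
        rcases Nat.lt_or_ge l (j - gm i j m) with hl1 | hl1
        · rw [gm_add_of_lt hij l (by omega)]
          have := ha0 l (by omega)
          rwa [suffix_suffix] at this
        · rw [show l = (j - gm i j m) + (l - (j - gm i j m)) by omega,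
            gm_wrap hij hm (show i + (l - (j - gm i j m)) < j by omega)]
          have := ha1 (l - (j - gm i j m)) (by omega)
          rwa [suffix_suffix] at this
  intro m h
  rcases Nat.lt_or_ge m i with hm | hm
  · have hgm : gm i j m = m := gm_eq_of_lt hij (by omega)
    rw [hgm] at h
    obtain ⟨k₀, hb0, ha0, hmin⟩ := untl_min h
    by_cases hcase : m + k₀ < j
    · refine ⟨k₀, ?_, ?_⟩
      · rw [suffix_suffix]
        apply (hβ _).mpr
        rw [gm_eq_of_lt hij (show m + k₀ < j from hcase)]
        rwa [suffix_suffix] at hb0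
      · intro l hl
        rw [suffix_suffix]
        apply (hα _).mpr
        rw [gm_eq_of_lt hij (show m + l < j by omega)]
        have := ha0 l hl
        rwa [suffix_suffix] at this
    · have hUi : (LTLFormula.untl α β).sat (π.suffix i) := by
        have := untl_shift h (i - m) (fun l hl hbs => by
          have := hmin l hbs; omega)
        rwa [suffix_suffix, show m + (i - m) = i by omega] at this
      have hloop := loop i (le_refl i) (by rwa [gm_eq_of_lt hij hij])
      obtain ⟨k₂, hb2, ha2⟩ := hloop
      rw [suffix_suffix] at hb2
      refine ⟨(i - m) + k₂, ?_, ?_⟩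
      · rw [suffix_suffix, show m + ((i - m) + k₂) = i + k₂ by omega]
        exact hb2
      · intro l hl
        rw [suffix_suffix]
        rcases Nat.lt_or_ge l (i - m) with hl1 | hl1
        · apply (hα _).mpr
          rw [gm_eq_of_lt hij (show m + l < j by omega)]
          have := ha0 l (by omega)
          rwa [suffix_suffix] at this
        · rw [show m + l = i + (l - (i - m)) by omega, ← suffix_suffix]
          exact ha2 (l - (i - m)) (by omega)
  · exact loop m hm h

end UntilHelpers

/-- the pumped trace agrees with `π` (through `gm`) on all subformulas of `ψ` -/
theorem pump_sat {π : Trace AP} {i j : ℕ} (hij : i < j) (ψ : LTLFormula AP)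
    (hagree : ∀ φ ∈ subf ψ, (φ.sat (π.suffix i) ↔ φ.sat (π.suffix j)))
    (hful : ∀ α β, (LTLFormula.untl α β) ∈ subf ψ →
      (LTLFormula.untl α β).sat (π.suffix i) → ∃ s, i ≤ s ∧ s < j ∧ β.sat (π.suffix s)) :
    ∀ φ, φ ∈ subf ψ → ∀ m,
      (φ.sat ((pump π i j).suffix m) ↔ φ.sat (π.suffix (gm i j m))) := by
  intro φ
  induction φ with
  | bot => intro _ m; simp [LTLFormula.sat]
  | atom p =>
    intro _ m
    simp only [LTLFormula.sat]
    show p ∈ (pump π i j) (m + 0) ↔ p ∈ π (gm i j m + 0)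
    simp [pump]
  | neg φ ih =>
    intro hmem m
    simp only [LTLFormula.sat]
    rw [ih (neg_mem_subf hmem) m]
  | disj φ χ ihφ ihχ =>
    intro hmem m
    simp only [LTLFormula.sat]
    rw [ihφ (disj_mem_subf hmem).1 m, ihχ (disj_mem_subf hmem).2 m]
  | next φ ih =>
    intro hmem m
    simp only [LTLFormula.sat]
    rw [suffix_suffix, suffix_suffix, ih (next_mem_subf hmem) (m + 1)]
    rcases Nat.lt_or_ge (gm i j m) (j - 1) with hc | hc
    · rw [gm_succ_low hij hc]
    · have hc' : gm i j m = j - 1 := by have := gm_lt hij m; omega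
      rw [gm_succ_high hij hc', hc', show j - 1 + 1 = j by omega]
      exact hagree φ (next_mem_subf hmem)
  | untl α β ihα ihβ =>
    intro hmem m
    constructor
    · exact untl_pump_to_pi hij (ihα (untl_mem_subf hmem).1) (ihβ (untl_mem_subf hmem).2)
        (hagree _ hmem) m
    · exact untl_pi_to_pump hij (ihα (untl_mem_subf hmem).1) (ihβ (untl_mem_subf hmem).2)
        (hagree _ hmem) (hful α β hmem) m

end LTLSupp

attribute [local instance] Classical.propDecidable

/-- the support of a Büchi automaton is an LTL theory. -/
theorem supp_is_theory (AP : Type) [Fintype AP] [Nonempty AP]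
    (B : Buchi (Set AP)) :
    CnLTL AP B.supp = B.supp := by
  ext ψ
  constructor
  · -- the hard direction
    intro hψ
    intro π hπ
    obtain ⟨ρ, hρ0, hρt, hρr⟩ := hπ
    -- pigeonhole: a color (state, satisfaction pattern of subformulas) occurs infinitely often
    set C : List (LTLFormula AP) := LTLSupp.subf ψ with hC
    let color : ℕ → Fin B.n × (Fin C.length → Bool) :=
      fun t => (ρ t, fun k => decide ((C.get k).sat (Trace.suffix π t)))
    obtain ⟨c, hc'⟩ := Finite.exists_infinite_fiber color
    have hc : (color ⁻¹' {c}).Infinite := Set.infinite_coe_iff.mp hc'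
    obtain ⟨i, hiS⟩ := hc.nonempty
    have hiS' : color i = c := hiS
    -- a bound containing fulfillments of all pending untils at i
    have hbnd : ∀ (l : List (LTLFormula AP)), ∃ b, ∀ α β, (LTLFormula.untl α β) ∈ l →
        (LTLFormula.untl α β).sat (Trace.suffix π i) →
        ∃ s, i ≤ s ∧ s < b ∧ β.sat (Trace.suffix π s) := by
      intro l
      induction l with
      | nil => exact ⟨0, by simp⟩
      | cons φ l ihl =>
        obtain ⟨b, hb⟩ := ihl
        by_cases hφ : ∃ α β, φ = LTLFormula.untl α β ∧ (LTLFormula.untl α β).sat (Trace.suffix π i)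
        · obtain ⟨α, β, rfl, hsat⟩ := hφ
          obtain ⟨k, hk, -⟩ := hsat
          rw [LTLSupp.suffix_suffix] at hk
          refine ⟨max b (i + k + 1), ?_⟩
          intro α' β' hmem hsat'
          rcases List.mem_cons.mp hmem with heq | hmem'
          · injection heq with h1 h2
            subst h1; subst h2
            exact ⟨i + k, by omega, by omega, hk⟩
          · obtain ⟨s, h1, h2, h3⟩ := hb α' β' hmem' hsat'
            exact ⟨s, h1, by omega, h3⟩
        · refine ⟨b, ?_⟩
          intro α' β' hmem hsat'
          rcases List.mem_cons.mp hmem with heq | hmem'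
          · exact absurd ⟨α', β', heq.symm, hsat'⟩ hφ
          · exact hb α' β' hmem' hsat'
    obtain ⟨b, hfulb⟩ := hbnd C
    -- a recurrence position beyond i and beyond the fulfillment bound
    obtain ⟨r, hr1, hr2⟩ := hρr (max (i + 1) b)
    -- a second occurrence of the color beyond r
    obtain ⟨j, hjS, hjr⟩ := hc.exists_gt r
    have hjS' : color j = c := hjS
    have hij : i < j := by omega
    have hcolor : color i = color j := by rw [hiS', hjS']
    have hρij : ρ i = ρ j := congrArg Prod.fst hcolor
    have hagree : ∀ φ ∈ LTLSupp.subf ψ, (φ.sat (Trace.suffix π i) ↔ φ.sat (Trace.suffix π j)) := by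
      intro φ hmem
      obtain ⟨k, hk⟩ := List.mem_iff_get.mp hmem
      have := congrFun (congrArg Prod.snd hcolor) k
      simp only [color] at this
      rw [hk] at this
      exact decide_eq_decide.mp this
    have hful : ∀ α β, (LTLFormula.untl α β) ∈ LTLSupp.subf ψ →
        (LTLFormula.untl α β).sat (Trace.suffix π i) →
        ∃ s, i ≤ s ∧ s < j ∧ β.sat (Trace.suffix π s) := by
      intro α β hmem hsat
      obtain ⟨s, h1, h2, h3⟩ := hfulb α β hmem hsat
      exact ⟨s, h1, by omega, h3⟩
    -- the pumped trace is accepted by B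
    set w : Trace AP := LTLSupp.pump π i j with hw
    have hρg : ∀ m, ρ (LTLSupp.gm i j (m + 1)) = ρ (LTLSupp.gm i j m + 1) := by
      intro m
      rcases Nat.lt_or_ge (LTLSupp.gm i j m) (j - 1) with hcs | hcs
      · rw [LTLSupp.gm_succ_low hij hcs]
      · have hc' : LTLSupp.gm i j m = j - 1 := by
          have := LTLSupp.gm_lt hij (m := m); omega
        rw [LTLSupp.gm_succ_high hij hc', hc', show j - 1 + 1 = j by omega, hρij]
    have hwlang : w ∈ B.lang := by
      refine ⟨fun m => ρ (LTLSupp.gm i j m), ?_, ?_, ?_⟩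
      · show ρ (LTLSupp.gm i j 0) ∈ B.start
        rw [LTLSupp.gm_zero hij]; exact hρ0
      · intro m
        show B.trans (ρ (LTLSupp.gm i j m)) (w m) (ρ (LTLSupp.gm i j (m + 1)))
        rw [hρg m]
        exact hρt (LTLSupp.gm i j m)
      · intro N
        refine ⟨r + (j - i) * (N + 1), ?_, ?_⟩
        · have : N + 1 ≤ (j - i) * (N + 1) := Nat.le_mul_of_pos_left _ (by omega)
          omega
        · show ρ (LTLSupp.gm i j (r + (j - i) * (N + 1))) ∈ B.recur
          rw [LTLSupp.gm_period hij (by omega) (N + 1),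
            LTLSupp.gm_eq_of_lt hij (by omega)]
          exact hr2
    -- the lasso Kripke structure generating exactly w
    let M : Kripke AP :=
      { n := j
        init := {s | (s : ℕ) = 0}
        init_nonempty := ⟨⟨0, by omega⟩, rfl⟩
        trans := fun a b => (b : ℕ) = LTLSupp.gm i j ((a : ℕ) + 1)
        trans_total := fun a => ⟨⟨LTLSupp.gm i j ((a : ℕ) + 1), LTLSupp.gm_lt hij _⟩, rfl⟩
        label := fun s => π (s : ℕ) }
    have htrM : ∀ τ ∈ M.traces, τ = w := by
      intro τ hτ
      obtain ⟨σ, hσ0, hσt, hσl⟩ := hτ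
      have hσ : ∀ m, (σ m : ℕ) = LTLSupp.gm i j m := by
        intro m
        induction m with
        | zero => rw [hσ0, LTLSupp.gm_zero hij]
        | succ m ihm =>
          have := hσt m
          simp only [M] at this
          rw [this, ihm, ← LTLSupp.gm_succ_comm hij]
      funext m
      rw [hσl m]
      show π ((σ m : ℕ)) = w m
      rw [hσ m]
      rfl
    have hwM : w ∈ M.traces := by
      refine ⟨fun m => ⟨LTLSupp.gm i j m, LTLSupp.gm_lt hij m⟩, ?_, ?_, ?_⟩
      · show (LTLSupp.gm i j 0) = 0
        exact LTLSupp.gm_zero hij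
      · intro m
        show (LTLSupp.gm i j (m + 1)) = LTLSupp.gm i j (LTLSupp.gm i j m + 1)
        exact LTLSupp.gm_succ_comm hij m
      · intro m; rfl
    have hMsup : M.satSet B.supp := by
      intro φ hφ τ hτ
      rw [htrM τ hτ]
      exact hφ w hwlang
    have hwψ : ψ.sat w := hψ M hMsup w hwM
    -- transfer back to π
    have h0 := LTLSupp.pump_sat hij ψ hagree hful ψ (LTLSupp.mem_subf_self ψ) 0
    rw [LTLSupp.gm_zero hij, LTLSupp.suffix_zero, LTLSupp.suffix_zero] at h0
    exact h0.mp hwψ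
  · -- the easy direction
    intro hψ M hM
    exact hM ψ hψ
end

section
/- Expansion of a Büchi-represented theory corresponds to intersection of automata: if A and A′ are Büchi automata over 𝒫(AP) and φ is an LTL formula such that L(A′) = L(A) ∩ {π | π ⊨ φ}, then supp(A′) = Cn_LTL(supp(A) ∪ {φ}). -/
namespace SuppAux

open LTLFormula

variable {AP : Type}

lemma suffix_suffix (π : Trace AP) (a b : ℕ) :
    (π.suffix a).suffix b = π.suffix (a + b) := by
  funext s; simp [Trace.suffix, Nat.add_assoc]

lemma suffix_zero (π : Trace AP) : π.suffix 0 = π := by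
  funext s; simp [Trace.suffix]

lemma untl_head {a b : LTLFormula AP} {π : Trace AP} (hb : b.sat π) :
    (untl a b).sat π :=
  ⟨0, by rwa [suffix_zero], fun j hj => absurd hj (Nat.not_lt_zero j)⟩

lemma untl_step {a b : LTLFormula AP} {π : Trace AP} (ha : a.sat π)
    (h : (untl a b).sat (π.suffix 1)) : (untl a b).sat π := by
  obtain ⟨d, hb, hall⟩ := h
  refine ⟨d + 1, ?_, ?_⟩
  · rw [show d + 1 = 1 + d by omega, ← suffix_suffix]; exact hb
  · intro e he
    cases e with
    | zero => rwa [suffix_zero]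
    | succ e' =>
      rw [show e' + 1 = 1 + e' by omega, ← suffix_suffix]
      exact hall e' (by omega)

def subf : LTLFormula AP → List (LTLFormula AP)
  | .bot => [.bot]
  | .atom p => [.atom p]
  | .neg a => .neg a :: subf a
  | .disj a b => .disj a b :: (subf a ++ subf b)
  | .next a => .next a :: subf a
  | .untl a b => .untl a b :: (subf a ++ subf b)

lemma subf_self (σ : LTLFormula AP) : σ ∈ subf σ := by
  cases σ <;> simp [subf]

lemma subf_sub {σ' σ : LTLFormula AP} (h : σ' ∈ subf σ) : subf σ' ⊆ subf σ := by
  induction σ with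
  | bot => simp [subf] at h; subst h; exact fun _ hx => hx
  | atom p => simp [subf] at h; subst h; exact fun _ hx => hx
  | neg a ih =>
    rcases List.mem_cons.mp h with h | h
    · subst h; exact fun _ hx => hx
    · exact fun x hx => List.mem_cons_of_mem _ (ih h hx)
  | next a ih =>
    rcases List.mem_cons.mp h with h | h
    · subst h; exact fun _ hx => hx
    · exact fun x hx => List.mem_cons_of_mem _ (ih h hx)
  | disj a b iha ihb =>
    rcases List.mem_cons.mp h with h | h
    · subst h; exact fun _ hx => hx
    · rcases List.mem_append.mp h with h | h
      · exact fun x hx => List.mem_cons_of_mem _ (List.mem_append_left _ (iha h hx))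
      · exact fun x hx => List.mem_cons_of_mem _ (List.mem_append_right _ (ihb h hx))
  | untl a b iha ihb =>
    rcases List.mem_cons.mp h with h | h
    · subst h; exact fun _ hx => hx
    · rcases List.mem_append.mp h with h | h
      · exact fun x hx => List.mem_cons_of_mem _ (List.mem_append_left _ (iha h hx))
      · exact fun x hx => List.mem_cons_of_mem _ (List.mem_append_right _ (ihb h hx))

lemma mem_of_neg {χ a : LTLFormula AP} (h : neg a ∈ subf χ) : a ∈ subf χ :=
  subf_sub h (List.mem_cons_of_mem _ (subf_self a))

lemma mem_of_next {χ a : LTLFormula AP} (h : next a ∈ subf χ) : a ∈ subf χ :=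
  subf_sub h (List.mem_cons_of_mem _ (subf_self a))

lemma mem_of_disj_left {χ a b : LTLFormula AP} (h : disj a b ∈ subf χ) : a ∈ subf χ :=
  subf_sub h (List.mem_cons_of_mem _ (List.mem_append_left _ (subf_self a)))

lemma mem_of_disj_right {χ a b : LTLFormula AP} (h : disj a b ∈ subf χ) : b ∈ subf χ :=
  subf_sub h (List.mem_cons_of_mem _ (List.mem_append_right _ (subf_self b)))

lemma mem_of_untl_left {χ a b : LTLFormula AP} (h : untl a b ∈ subf χ) : a ∈ subf χ :=
  subf_sub h (List.mem_cons_of_mem _ (List.mem_append_left _ (subf_self a)))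

lemma mem_of_untl_right {χ a b : LTLFormula AP} (h : untl a b ∈ subf χ) : b ∈ subf χ :=
  subf_sub h (List.mem_cons_of_mem _ (List.mem_append_right _ (subf_self b)))

lemma le_foldr_max {x : ℕ} {l : List ℕ} (h : x ∈ l) : x ≤ l.foldr max 0 := by
  induction l with
  | nil => simp at h
  | cons y t ih =>
    rcases List.mem_cons.mp h with rfl | h
    · exact le_max_left _ _
    · exact le_trans (ih h) (le_max_right _ _)

open Classical in
noncomputable def fulD (τ : Trace AP) : LTLFormula AP → ℕ
  | .untl a b =>
      if h : ∃ d, b.sat (τ.suffix d) ∧ ∀ e < d, a.sat (τ.suffix e) then h.choose else 0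
  | _ => 0

lemma fulD_spec {τ : Trace AP} {a b : LTLFormula AP} (h : (untl a b).sat τ) :
    b.sat (τ.suffix (fulD τ (untl a b))) ∧
    ∀ e < fulD τ (untl a b), a.sat (τ.suffix e) := by
  have h' : ∃ d, b.sat (τ.suffix d) ∧ ∀ e < d, a.sat (τ.suffix e) := h
  simp only [fulD, dif_pos h']
  exact h'.choose_spec

noncomputable def enum {Q : ℕ → Prop} (h : ∀ N : ℕ, ∃ t, N ≤ t ∧ Q t) : ℕ → ℕ
  | 0 => (h 0).choose
  | n + 1 => (h (enum h n + 1)).choose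

lemma enum_q {Q : ℕ → Prop} (h : ∀ N : ℕ, ∃ t, N ≤ t ∧ Q t) (n : ℕ) : Q (enum h n) := by
  cases n with
  | zero => exact (h 0).choose_spec.2
  | succ n => exact (h (enum h n + 1)).choose_spec.2

lemma le_enum {Q : ℕ → Prop} (h : ∀ N : ℕ, ∃ t, N ≤ t ∧ Q t) : ∀ n, n ≤ enum h n := by
  intro n
  induction n with
  | zero => exact Nat.zero_le _
  | succ n ih =>
    have h2 : enum h n + 1 ≤ enum h (n + 1) := by
      have := (h (enum h n + 1)).choose_spec.1
      simpa [enum] using this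
    omega

def oFun (i j t : ℕ) : ℕ := if t < i then t else i + (t - i) % (j - i)

lemma o_of_lt {i j t : ℕ} (h : t < i) : oFun i j t = t := if_pos h

lemma o_of_ge {i j t : ℕ} (h : i ≤ t) : oFun i j t = i + (t - i) % (j - i) :=
  if_neg (by omega)

lemma o_lt {i j : ℕ} (hij : i < j) (t : ℕ) : oFun i j t < j := by
  unfold oFun; split_ifs with h
  · omega
  · have : (t - i) % (j - i) < j - i := Nat.mod_lt _ (by omega)
    omega

lemma o_small {i j : ℕ} (hij : i < j) {t : ℕ} (ht : t < j) : oFun i j t = t := by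
  unfold oFun; split_ifs with h
  · rfl
  · have h2 : t - i < j - i := by omega
    rw [Nat.mod_eq_of_lt h2]; omega

lemma o_j {i j : ℕ} (hij : i < j) : oFun i j j = i := by
  rw [o_of_ge (by omega)]; simp [Nat.mod_self]

lemma o_zero {i j : ℕ} : oFun i j 0 = 0 := by
  by_cases h : 0 < i
  · exact o_of_lt h
  · rw [o_of_ge (by omega)]
    have : i = 0 := by omega
    simp [this]

lemma o_o {i j : ℕ} (hij : i < j) (t s : ℕ) :
    oFun i j (oFun i j t + s) = oFun i j (t + s) := by
  by_cases ht : t < i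
  · rw [o_of_lt ht]
  · have ht' : i ≤ t := le_of_not_gt ht
    rw [o_of_ge ht', o_of_ge (show i ≤ i + (t - i) % (j - i) + s by omega),
        o_of_ge (show i ≤ t + s by omega)]
    congr 1
    have e1 : i + (t - i) % (j - i) + s - i = (t - i) % (j - i) + s := by omega
    rw [e1, Nat.mod_add_mod]
    congr 1
    omega

lemma o_idem {i j : ℕ} (hij : i < j) (t : ℕ) : oFun i j (oFun i j t) = oFun i j t := by
  have := o_o hij t 0
  simpa using this

lemma o_add {i j t s : ℕ} (hij : i < j) (h : oFun i j t + s < j) :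
    oFun i j (t + s) = oFun i j t + s := by
  rw [← o_o hij t s]
  exact o_small hij h

lemma o_step {i j : ℕ} (hij : i < j) (t : ℕ) :
    oFun i j (t + 1) = oFun i j t + 1 ∨
      (oFun i j t + 1 = j ∧ oFun i j (t + 1) = i) := by
  have h := o_lt hij t
  by_cases h1 : oFun i j t + 1 < j
  · left; exact o_add hij h1
  · right
    have h2 : oFun i j t + 1 = j := by omega
    refine ⟨h2, ?_⟩
    rw [← o_o hij t 1, h2, o_j hij]

lemma TL (π : Trace AP) (χ : LTLFormula AP) (i j : ℕ) (hij : i < j)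
    (hS : ∀ σ ∈ subf χ, (σ.sat (π.suffix i) ↔ σ.sat (π.suffix j)))
    (hFul : ∀ a b, untl a b ∈ subf χ → (untl a b).sat (π.suffix i) →
      ∃ m, i + m < j ∧ b.sat (π.suffix (i + m)) ∧ ∀ e < m, a.sat (π.suffix (i + e))) :
    ∀ σ, σ ∈ subf χ → ∀ t,
      (σ.sat (Trace.suffix (fun s => π (oFun i j s)) t) ↔ σ.sat (π.suffix (oFun i j t))) := by
  have hShift : ∀ σ', σ' ∈ subf χ → ∀ t,
      (σ'.sat (π.suffix (oFun i j (t + 1))) ↔ σ'.sat (π.suffix (oFun i j t + 1))) := by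
    intro σ' hσ' t
    rcases o_step hij t with h1 | ⟨h1, h2⟩
    · rw [h1]
    · rw [h1, h2]
      exact hS σ' hσ'
  intro σ
  induction σ with
  | bot =>
    intro _ t
    simp [LTLFormula.sat]
  | atom p =>
    intro _ t
    show p ∈ (Trace.suffix (fun s => π (oFun i j s)) t) 0 ↔ p ∈ (π.suffix (oFun i j t)) 0
    simp [Trace.suffix]
  | neg a ih =>
    intro hσ t
    have ha := mem_of_neg hσ
    show ¬ _ ↔ ¬ _
    exact not_congr (ih ha t)
  | disj a b iha ihb =>
    intro hσ t
    exact or_congr (iha (mem_of_disj_left hσ) t) (ihb (mem_of_disj_right hσ) t)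
  | next a ih =>
    intro hσ t
    have ha := mem_of_next hσ
    show a.sat ((Trace.suffix (fun s => π (oFun i j s)) t).suffix 1) ↔
      a.sat ((π.suffix (oFun i j t)).suffix 1)
    rw [suffix_suffix, suffix_suffix]
    exact (ih ha (t + 1)).trans (hShift a ha t)
  | untl a b iha ihb =>
    intro hσ t
    have ha := mem_of_untl_left hσ
    have hb := mem_of_untl_right hσ
    constructor
    · rintro ⟨d, hbd, hall⟩
      rw [suffix_suffix] at hbd
      have key : ∀ s, s ≤ d → (untl a b).sat (π.suffix (oFun i j (t + (d - s)))) := by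
        intro s
        induction s with
        | zero =>
          intro _
          have hbp : b.sat (π.suffix (oFun i j (t + d))) := (ihb hb (t + d)).mp hbd
          simpa using untl_head hbp
        | succ s ihs =>
          intro hs
          have h1 := ihs (by omega)
          have hk1 : t + (d - s) = (t + (d - (s + 1))) + 1 := by omega
          rw [hk1] at h1
          have h2 : (untl a b).sat (π.suffix (oFun i j (t + (d - (s + 1))) + 1)) :=
            (hShift _ hσ _).mp h1
          have h3 : a.sat (π.suffix (oFun i j (t + (d - (s + 1))))) := by
            have h4 := hall (d - (s + 1)) (by omega)
            rw [suffix_suffix] at h4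
            exact (iha ha _).mp h4
          refine untl_step h3 ?_
          rwa [suffix_suffix]
      have hfin := key d le_rfl
      simpa using hfin
    · rintro ⟨d, hbd, hall⟩
      rw [suffix_suffix] at hbd
      by_cases hcase : oFun i j t + d < j
      · refine ⟨d, ?_, ?_⟩
        · rw [suffix_suffix]
          refine (ihb hb (t + d)).mpr ?_
          rw [o_add hij hcase]
          exact hbd
        · intro e he
          rw [suffix_suffix]
          refine (iha ha (t + e)).mpr ?_
          rw [o_add hij (by omega)]
          have h5 := hall e he
          rwa [suffix_suffix] at h5
      · push_neg at hcase
        have hotj : oFun i j t < j := o_lt hij t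
        have hcd : j - oFun i j t ≤ d := by omega
        set c := j - oFun i j t with hc
        have hUj : (untl a b).sat (π.suffix j) := by
          refine ⟨d - c, ?_, ?_⟩
          · rw [suffix_suffix, show j + (d - c) = oFun i j t + d by omega]
            exact hbd
          · intro e he
            rw [suffix_suffix, show j + e = oFun i j t + (c + e) by omega]
            have h6 := hall (c + e) (by omega)
            rwa [suffix_suffix] at h6
        have hUi : (untl a b).sat (π.suffix i) := (hS _ hσ).mpr hUj
        obtain ⟨m, hm, hbm, ham⟩ := hFul a b hσ hUi
        have htc : oFun i j (t + c) = i := by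
          rw [← o_o hij t c, show oFun i j t + c = j by omega, o_j hij]
        refine ⟨c + m, ?_, ?_⟩
        · rw [suffix_suffix]
          refine (ihb hb (t + (c + m))).mpr ?_
          have h7 : oFun i j (t + (c + m)) = i + m := by
            rw [show t + (c + m) = (t + c) + m by omega, ← o_o hij (t + c) m, htc,
                o_small hij hm]
          rw [h7]
          exact hbm
        · intro e he
          rw [suffix_suffix]
          refine (iha ha (t + e)).mpr ?_
          by_cases hec : e < c
          · rw [o_add hij (show oFun i j t + e < j by omega)]
            have h8 := hall e (by omega)
            rwa [suffix_suffix] at h8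
          · have h9 : oFun i j (t + e) = i + (e - c) := by
              rw [show t + e = (t + c) + (e - c) by omega, ← o_o hij (t + c) (e - c), htc,
                  o_small hij (by omega)]
            rw [h9]
            exact ham (e - c) (by omega)

lemma lasso (B : Buchi (Set AP)) (χ : LTLFormula AP) (π : Trace AP)
    (hπ : π ∈ B.lang) (hχ : χ.sat π) :
    ∃ (M : Kripke AP) (w : Trace AP), M.traces = {w} ∧ w ∈ B.lang ∧ χ.sat w := by
  classical
  obtain ⟨ρ, hstart, htrans, hrec⟩ := hπ
  set prof : ℕ → Fin B.n × (Fin (subf χ).length → Bool) :=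
    fun t => (ρ t, fun k => decide (((subf χ).get k).sat (π.suffix t))) with hprofdef
  obtain ⟨bb, hbinf⟩ := Finite.exists_infinite_fiber (fun n => prof (enum hrec n))
  have hset : ((fun n => prof (enum hrec n)) ⁻¹' {bb}).Infinite := Set.infinite_coe_iff.mp hbinf
  obtain ⟨n₁, hn₁⟩ := hset.nonempty
  set i := enum hrec n₁ with hi
  have hrecur_i : ρ i ∈ B.recur := enum_q hrec n₁
  set bnd := ((subf χ).map (fulD (π.suffix i))).foldr max 0 with hbnd
  obtain ⟨n₂, hn₂mem, hn₂gt⟩ := hset.exists_gt (i + bnd)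
  set j := enum hrec n₂ with hj
  have hijle : i + bnd < j := lt_of_lt_of_le hn₂gt (le_enum hrec n₂)
  have hij : i < j := by omega
  have hprof : prof i = prof j := by
    have h1 : prof i = bb := hn₁
    have h2 : prof j = bb := hn₂mem
    rw [h1, h2]
  have hρij : ρ i = ρ j := congrArg Prod.fst hprof
  have hS : ∀ σ ∈ subf χ, (σ.sat (π.suffix i) ↔ σ.sat (π.suffix j)) := by
    intro σ hσ
    obtain ⟨k, hk⟩ := List.get_of_mem hσ
    have h3 := congrFun (congrArg Prod.snd hprof) k
    simp only [hprofdef] at h3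
    rw [hk] at h3
    exact decide_eq_decide.mp h3
  have hFul : ∀ a b', untl a b' ∈ subf χ → (untl a b').sat (π.suffix i) →
      ∃ m, i + m < j ∧ b'.sat (π.suffix (i + m)) ∧ ∀ e < m, a.sat (π.suffix (i + e)) := by
    intro a b' hmem hsat
    obtain ⟨h1, h2⟩ := fulD_spec (τ := π.suffix i) hsat
    refine ⟨fulD (π.suffix i) (untl a b'), ?_, ?_, ?_⟩
    · have h4 : fulD (π.suffix i) (untl a b') ≤ bnd :=
        le_foldr_max (List.mem_map_of_mem (f := fulD (π.suffix i)) hmem)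
      omega
    · rw [← suffix_suffix]; exact h1
    · intro e he; rw [← suffix_suffix]; exact h2 e he
  have hTL := TL π χ i j hij hS hFul
  set w : Trace AP := fun s => π (oFun i j s) with hwdef
  have h0 := hTL χ (subf_self χ) 0
  rw [suffix_zero, o_zero, suffix_zero] at h0
  have hχw : χ.sat w := h0.mpr hχ
  have hwt : ∀ t, w t = π (oFun i j t) := fun t => rfl
  have hwlang : w ∈ B.lang := by
    refine ⟨fun t => ρ (oFun i j t), ?_, ?_, ?_⟩
    · show ρ (oFun i j 0) ∈ B.start
      rw [o_zero]; exact hstart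
    · intro t
      show B.trans (ρ (oFun i j t)) (w t) (ρ (oFun i j (t + 1)))
      have ht := htrans (oFun i j t)
      rcases o_step hij t with h1 | ⟨h1, h2⟩
      · rw [hwt t, h1]; exact ht
      · rw [hwt t, h2]
        rw [h1, ← hρij] at ht
        exact ht
    · intro N
      refine ⟨i + N * (j - i), ?_, ?_⟩
      · have h5 : N * 1 ≤ N * (j - i) := Nat.mul_le_mul_left N (by omega)
        omega
      · show ρ (oFun i j (i + N * (j - i))) ∈ B.recur
        have h6 : oFun i j (i + N * (j - i)) = i := by
          rw [o_of_ge (by omega), show i + N * (j - i) - i = N * (j - i) by omega,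
              Nat.mul_mod_left]
          omega
        rw [h6]; exact hrecur_i
  have hjpos : 0 < j := by omega
  refine ⟨⟨j, {⟨0, hjpos⟩}, ⟨_, rfl⟩,
      fun s s' => (s' : ℕ) = oFun i j ((s : ℕ) + 1),
      fun s => ⟨⟨oFun i j ((s : ℕ) + 1), o_lt hij _⟩, rfl⟩,
      fun s => w (s : ℕ)⟩, w, ?_, hwlang, hχw⟩
  ext τ
  simp only [Set.mem_singleton_iff]
  constructor
  · rintro ⟨ρ₂, h0', hstep, hlab⟩
    have hcoe : ∀ t, (ρ₂ t : ℕ) = oFun i j t := by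
      intro t
      induction t with
      | zero =>
        have h7 : ρ₂ 0 = ⟨0, hjpos⟩ := h0'
        rw [h7, o_zero]
      | succ t ih =>
        have h8 := hstep t
        simp only at h8
        rw [ih] at h8
        rw [h8, o_o hij t 1]
    funext t
    rw [hlab t]
    show w ((ρ₂ t : ℕ)) = w t
    rw [hcoe t, hwt, hwt, o_idem hij]
  · rintro rfl
    refine ⟨fun t => ⟨oFun i j t, o_lt hij t⟩, ?_, ?_, ?_⟩
    · show (⟨oFun i j 0, _⟩ : Fin j) ∈ ({⟨0, hjpos⟩} : Set (Fin j))
      simp [o_zero]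
    · intro t
      show oFun i j (t + 1) = oFun i j (oFun i j t + 1)
      exact (o_o hij t 1).symm
    · intro t
      show w t = w (oFun i j t)
      rw [hwt, hwt, o_idem hij]

end SuppAux

/-- expansion corresponds to automata intersection: if
`L(A') = L(A) ∩ {π | π ⊨ φ}` then `supp(A') = Cn_LTL(supp(A) ∪ {φ})`. -/
theorem supp_expansion (AP : Type) [Fintype AP] [Nonempty AP]
    (B B' : Buchi (Set AP)) (φ : LTLFormula AP)
    (h : B'.lang = B.lang ∩ {π : Trace AP | φ.sat π}) :
    B'.supp = CnLTL AP (B.supp ∪ {φ}) := by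
  ext ψ
  simp only [Buchi.supp, CnLTL, Set.mem_setOf_eq]
  constructor
  · intro hψ M hM τ hτ
    have hφτ : φ.sat τ := hM φ (Set.mem_union_right _ rfl) τ hτ
    have hχ : (LTLFormula.disj (.neg φ) ψ) ∈ B.supp := by
      intro π hπ
      by_cases hf : φ.sat π
      · have hπ' : π ∈ B'.lang := by rw [h]; exact ⟨hπ, hf⟩
        exact Or.inr (hψ π hπ')
      · exact Or.inl hf
    have hd := hM _ (Set.mem_union_left _ hχ) τ hτ
    simp only [LTLFormula.sat] at hd
    rcases hd with hneg | hyes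
    · exact absurd hφτ hneg
    · exact hyes
  · intro hψ π hπ
    by_contra hns
    have hχπ : (LTLFormula.neg ψ).sat π := hns
    obtain ⟨M, w, htr, hwlang, hχw⟩ := SuppAux.lasso B' (.neg ψ) π hπ hχπ
    have hw : w ∈ B.lang ∧ φ.sat w := by
      have h1 := hwlang
      rw [h] at h1
      exact h1
    have hMsat : M.satSet (B.supp ∪ {φ}) := by
      intro σ hσ τ hτ
      rw [htr, Set.mem_singleton_iff] at hτ
      subst hτ
      rcases hσ with hσ | hσ
      · exact hσ _ hw.1
      · rw [Set.mem_singleton_iff] at hσ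
        subst hσ
        exact hw.2
    have hsw : ψ.sat w := hψ M hMsat w (by rw [htr]; rfl)
    exact hχw hsw
end
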